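/- arXiv:2505.00427 — 5 statements merged into one kernel-verified Lean document; each statement's English description precedes it below -/
import Mathlib

section
/- Optimality of covariant decoders (Lemma 3). Let G be a compact topological group with continuous unitary representations u_L on a finite type L and u_{P'} on a finite type P'. Let Ẽ : L → P' be a G-covariant quantum channel (the composition of a G-covariant encoder and G-covariant noise), and let ε : ℝ. If there exists a quantum channel R : P' → L such that for every unit vector ψ on L, (star ψ ⬝ᵥ (R (Ẽ (Matrix.vecMulVec ψ (star ψ)))).mulVec ψ).re ≥ 1 − ε, then there exists a G-covariant quantum channel R' : P' → L (covariant with respect to u_{P'} and u_L) satisfying the same bound: for every unit vector ψ on L, (star ψ ⬝ᵥ (R' (Ẽ (Matrix.vecMulVec ψ (star ψ)))).mulVec ψ).re ≥ 1 − ε. -/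
open scoped Kronecker ComplexOrder
open Matrix MeasureTheory

noncomputable section

/-- Choi matrix of a linear map on matrices. -/
def choiMatrix {A B : Type*} [Fintype A] [DecidableEq A] [Fintype B]
    (E : Matrix A A ℂ →ₗ[ℂ] Matrix B B ℂ) : Matrix (A × B) (A × B) ℂ :=
  ∑ i, ∑ j, (Matrix.single i j (1 : ℂ)) ⊗ₖ E (Matrix.single i j 1)

/-- A linear map is a quantum channel if it is trace-preserving and its Choi matrix is PSD. -/
def IsQuantumChannel {A B : Type*} [Fintype A] [DecidableEq A] [Fintype B]
    (E : Matrix A A ℂ →ₗ[ℂ] Matrix B B ℂ) : Prop :=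
  (∀ X, (E X).trace = X.trace) ∧ (choiMatrix E).PosSemidef

/-- A state: positive semidefinite with unit trace. -/
def IsState {S : Type*} [Fintype S] (ρ : Matrix S S ℂ) : Prop := ρ.PosSemidef ∧ ρ.trace = 1

/-- A unit vector. -/
def IsUnitVector {S : Type*} [Fintype S] (ψ : S → ℂ) : Prop := ∑ s, ‖ψ s‖ ^ 2 = 1

/-- The pure state (rank-one projector) of a vector. -/
def pureState {S : Type*} (ψ : S → ℂ) : Matrix S S ℂ := Matrix.vecMulVec ψ (star ψ)

/-- `G`-covariance of a channel with respect to unitary representations `u`, `v`. -/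
def IsCovariant {G A B : Type*} [Group G] [Fintype A] [DecidableEq A]
    [Fintype B] [DecidableEq B]
    (u : G →* Matrix.unitaryGroup A ℂ) (v : G →* Matrix.unitaryGroup B ℂ)
    (E : Matrix A A ℂ →ₗ[ℂ] Matrix B B ℂ) : Prop :=
  ∀ (g : G) (X : Matrix A A ℂ),
    E ((u g : Matrix A A ℂ) * X * (u g : Matrix A A ℂ)ᴴ) =
      (v g : Matrix B B ℂ) * E X * (v g : Matrix B B ℂ)ᴴ


/-!
Average the conjugated decoders `g • R = U_L(g) ∘ R ∘ U_{P'}(g)†` over the normalized Haar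
measure. Each `g • R` is a channel, and the average of channels is a channel. Since `Ẽ` is
covariant, the fidelity of `g • R` at `ψ` is that of `R` at the unit vector `U_L(g)† ψ`, so the
average keeps the worst-case bound; left invariance of the Haar measure makes it covariant.
-/

-- Any norm will do: it only serves to define Bochner integrals of matrices.
attribute [local instance] Matrix.normedAddCommGroup Matrix.normedSpace

/-- Instance synthesis does not find this through the local norm, whose topology is only
defeq, not reducibly, to the product topology on matrices. -/
abbrev Matrix.continuousENorm {m n : Type*} [Fintype m] [Fintype n] :
    ContinuousENorm (Matrix m n ℂ) :=
  SeminormedAddGroup.toContinuousENorm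

attribute [local instance] Matrix.continuousENorm

theorem LinearMap.integral_comp_comm {α E F : Type*} [MeasurableSpace α] {μ : Measure α}
    [NormedAddCommGroup E] [NormedSpace ℂ E] [FiniteDimensional ℂ E]
    [NormedAddCommGroup F] [NormedSpace ℂ F] [CompleteSpace F]
    (T : E →ₗ[ℂ] F) {f : α → E} (hf : Integrable f μ) :
    ∫ a, T (f a) ∂μ = T (∫ a, f a ∂μ) :=
  (LinearMap.toContinuousLinearMap T).integral_comp_comm hf

theorem LinearMap.integrable_comp {α E F : Type*} [MeasurableSpace α] {μ : Measure α}
    [NormedAddCommGroup E] [NormedSpace ℂ E] [FiniteDimensional ℂ E]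
    [NormedAddCommGroup F] [NormedSpace ℂ F]
    (T : E →ₗ[ℂ] F) {f : α → E} (hf : Integrable f μ) : Integrable (fun a => T (f a)) μ :=
  (LinearMap.toContinuousLinearMap T).integrable_comp hf

namespace Matrix

variable {n : Type*} [Fintype n]

def expectationₗ (x : n → ℂ) : Matrix n n ℂ →ₗ[ℂ] ℂ where
  toFun M := star x ⬝ᵥ M *ᵥ x
  map_add' M N := by simp only [add_mulVec, dotProduct_add]
  map_smul' c M := by simp only [smul_mulVec, dotProduct_smul, RingHom.id_apply]

@[simp]
theorem expectationₗ_apply (x : n → ℂ) (M : Matrix n n ℂ) :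
    expectationₗ x M = star x ⬝ᵥ M *ᵥ x := rfl

theorem PosSemidef.integral {α : Type*} [MeasurableSpace α] {μ : Measure α}
    {f : α → Matrix n n ℂ} (hf : ∀ a, (f a).PosSemidef) : (∫ a, f a ∂μ).PosSemidef := by
  by_cases hint : Integrable f μ
  swap
  · rw [integral_undef hint]
    exact .zero
  refine .of_dotProduct_mulVec_nonneg ?_ fun x => ?_
  · calc (∫ a, f a ∂μ)ᴴ = starL' ℝ (∫ a, f a ∂μ) := rfl
      _ = ∫ a, (f a)ᴴ ∂μ := ((starL' ℝ).integral_comp_comm f).symm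
      _ = ∫ a, f a ∂μ := by simp only [fun a => (hf a).1.eq]
  · rw [← expectationₗ_apply, ← LinearMap.integral_comp_comm _ hint]
    exact integral_nonneg fun a => (hf a).dotProduct_mulVec_nonneg x

theorem dotProduct_mulVec_mul_mul_conjTranspose (U M : Matrix n n ℂ) (x : n → ℂ) :
    star x ⬝ᵥ (U * M * Uᴴ) *ᵥ x = star (Uᴴ *ᵥ x) ⬝ᵥ M *ᵥ (Uᴴ *ᵥ x) := by
  rw [← mulVec_mulVec, ← mulVec_mulVec, dotProduct_mulVec (star x) U, star_mulVec,
    conjTranspose_conjTranspose]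

theorem mul_pureState_mul_conjTranspose (U : Matrix n n ℂ) (x : n → ℂ) :
    U * pureState x * Uᴴ = pureState (U *ᵥ x) := by
  rw [pureState, pureState, mul_vecMulVec, vecMulVec_mul, star_mulVec]

variable [DecidableEq n]

theorem trace_mul_mul_conjTranspose {U : Matrix n n ℂ} (hU : Uᴴ * U = 1) (M : Matrix n n ℂ) :
    (U * M * Uᴴ).trace = M.trace := by
  rw [trace_mul_cycle, hU, Matrix.one_mul]

@[simp]
theorem UnitaryGroup.conjTranspose_mul_self (U : unitaryGroup n ℂ) :
    (U : Matrix n n ℂ)ᴴ * U = 1 :=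
  Unitary.coe_star_mul_self U

@[simp]
theorem UnitaryGroup.mul_conjTranspose_self (U : unitaryGroup n ℂ) :
    (U : Matrix n n ℂ) * (U : Matrix n n ℂ)ᴴ = 1 :=
  Unitary.coe_mul_star_self U

@[simp]
theorem UnitaryGroup.conjTranspose_mul_self_mul (U : unitaryGroup n ℂ) (M : Matrix n n ℂ) :
    (U : Matrix n n ℂ)ᴴ * ((U : Matrix n n ℂ) * M) = M := by
  rw [← Matrix.mul_assoc, conjTranspose_mul_self, Matrix.one_mul]

@[simp]
theorem UnitaryGroup.mul_conjTranspose_self_mul (U : unitaryGroup n ℂ) (M : Matrix n n ℂ) :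
    (U : Matrix n n ℂ) * ((U : Matrix n n ℂ)ᴴ * M) = M := by
  rw [← Matrix.mul_assoc, mul_conjTranspose_self, Matrix.one_mul]

end Matrix

theorem isUnitVector_iff {S : Type*} [Fintype S] (ψ : S → ℂ) :
    IsUnitVector ψ ↔ star ψ ⬝ᵥ ψ = 1 := by
  have key : star ψ ⬝ᵥ ψ = ((∑ s, ‖ψ s‖ ^ 2 : ℝ) : ℂ) := by
    push_cast
    refine Finset.sum_congr rfl fun s _ => ?_
    rw [Pi.star_apply, RCLike.star_def, mul_comm, Complex.mul_conj']
  rw [IsUnitVector, key]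
  exact_mod_cast Iff.rfl

theorem IsUnitVector.mulVec {S : Type*} [Fintype S] [DecidableEq S] {ψ : S → ℂ}
    (hψ : IsUnitVector ψ) {U : Matrix S S ℂ} (hU : Uᴴ * U = 1) : IsUnitVector (U *ᵥ ψ) := by
  rw [isUnitVector_iff] at hψ ⊢
  rw [star_mulVec, ← dotProduct_mulVec, mulVec_mulVec, hU, one_mulVec, hψ]

section Choi

variable {A B : Type*} [Fintype A] [DecidableEq A] [Fintype B]

theorem choiMatrix_apply (E : Matrix A A ℂ →ₗ[ℂ] Matrix B B ℂ) (i j : A) (a b : B) :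
    choiMatrix E (i, a) (j, b) = E (single i j 1) a b := by
  simp [choiMatrix, Matrix.sum_apply, single, ite_and]

theorem choiMatrix_mulLeftRight_comp_comp (E : Matrix A A ℂ →ₗ[ℂ] Matrix B B ℂ)
    (U U' : Matrix A A ℂ) (V V' : Matrix B B ℂ) :
    choiMatrix (LinearMap.mulLeftRight ℂ (V, V') ∘ₗ E ∘ₗ LinearMap.mulLeftRight ℂ (U, U')) =
      (Uᵀ ⊗ₖ V) * choiMatrix E * (U'ᵀ ⊗ₖ V') := by
  have hsingle (i j : A) : U * single i j 1 * U' = ∑ k, ∑ l, (U k i * U' j l) • single k l 1 := by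
    conv_lhs => rw [matrix_eq_sum_single (U * single i j 1 * U')]
    simp [mul_apply, single_apply, ite_and, smul_single]
  ext ⟨i, a⟩ ⟨j, b⟩
  simp only [LinearMap.comp_apply, LinearMap.mulLeftRight_apply, hsingle, map_sum, map_smul,
    mul_apply, Matrix.sum_apply, Matrix.smul_apply, Fintype.sum_prod_type, kroneckerMap_apply,
    transpose_apply, choiMatrix_apply, Finset.sum_mul, Finset.mul_sum, smul_eq_mul]
  rw [Finset.sum_comm]
  refine Finset.sum_congr rfl fun l _ => ?_
  rw [Finset.sum_comm]
  refine Finset.sum_congr rfl fun d _ => Finset.sum_congr rfl fun k _ =>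
    Finset.sum_congr rfl fun c _ => by ring

end Choi

section Integral

variable {α V W : Type*} [MeasurableSpace α] [AddCommGroup V] [Module ℂ V]
  [NormedAddCommGroup W] [NormedSpace ℂ W]

/-- Junk value `0` unless `a ↦ F a x` is integrable for every `x`. -/
def LinearMap.integral (μ : Measure α) (F : α → V →ₗ[ℂ] W) : V →ₗ[ℂ] W :=
  open Classical in
  if hF : ∀ x, Integrable (fun a => F a x) μ then
    { toFun x := ∫ a, F a x ∂μ
      map_add' x y := by simp only [map_add]; exact integral_add (hF x) (hF y)
      map_smul' c x := by simp only [map_smul]; exact integral_smul c _ }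
  else 0

theorem LinearMap.integral_apply {μ : Measure α} {F : α → V →ₗ[ℂ] W}
    (hF : ∀ x, Integrable (fun a => F a x) μ) (x : V) :
    LinearMap.integral μ F x = ∫ a, F a x ∂μ := by
  rw [LinearMap.integral, dif_pos hF]
  rfl

end Integral

section Channel

variable {A B : Type*} [Fintype A] [DecidableEq A] [Fintype B]
variable {α : Type*} [MeasurableSpace α] {μ : Measure α}

theorem choiMatrix_integral {F : α → Matrix A A ℂ →ₗ[ℂ] Matrix B B ℂ}
    (hF : ∀ X, Integrable (fun a => F a X) μ) :
    choiMatrix (LinearMap.integral μ F) = ∫ a, choiMatrix (F a) ∂μ := by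
  have hterm (i j : A) : Integrable (fun a => single i j (1 : ℂ) ⊗ₖ F a (single i j 1)) μ :=
    (kroneckerBilinear (R := ℂ) (single i j (1 : ℂ))).integrable_comp (hF _)
  simp only [choiMatrix, LinearMap.integral_apply hF]
  rw [integral_finsetSum _ fun i _ => integrable_finsetSum _ fun j _ => hterm i j]
  refine Finset.sum_congr rfl fun i _ => ?_
  rw [integral_finsetSum _ fun j _ => hterm i j]
  refine Finset.sum_congr rfl fun j _ => ?_
  exact ((kroneckerBilinear (R := ℂ) (single i j (1 : ℂ))).integral_comp_comm (hF _)).symm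

theorem IsQuantumChannel.integral [IsProbabilityMeasure μ] {F : α → Matrix A A ℂ →ₗ[ℂ] Matrix B B ℂ}
    (hF : ∀ X, Integrable (fun a => F a X) μ) (h : ∀ a, IsQuantumChannel (F a)) :
    IsQuantumChannel (LinearMap.integral μ F) := by
  refine ⟨fun X => ?_, ?_⟩
  · calc (LinearMap.integral μ F X).trace = ∫ a, (F a X).trace ∂μ := by
          rw [LinearMap.integral_apply hF]
          exact (LinearMap.integral_comp_comm (traceLinearMap B ℂ ℂ) (hF X)).symm
      _ = X.trace := by simp [fun a => (h a).1 X]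
  · rw [choiMatrix_integral hF]
    exact PosSemidef.integral fun a => (h a).2

variable [DecidableEq B]

theorem IsQuantumChannel.mulLeftRight_comp_comp {E : Matrix A A ℂ →ₗ[ℂ] Matrix B B ℂ}
    (hE : IsQuantumChannel E) (U : unitaryGroup A ℂ) (V : unitaryGroup B ℂ) :
    IsQuantumChannel (LinearMap.mulLeftRight ℂ ((V : Matrix B B ℂ), (V : Matrix B B ℂ)ᴴ) ∘ₗ E ∘ₗ
      LinearMap.mulLeftRight ℂ ((U : Matrix A A ℂ), (U : Matrix A A ℂ)ᴴ)) := by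
  refine ⟨fun X => ?_, ?_⟩
  · simp only [LinearMap.comp_apply, LinearMap.mulLeftRight_apply]
    rw [trace_mul_mul_conjTranspose (by simp), hE.1, trace_mul_mul_conjTranspose (by simp)]
  · have := hE.2.mul_mul_conjTranspose_same ((U : Matrix A A ℂ)ᵀ ⊗ₖ (V : Matrix B B ℂ))
    rwa [conjTranspose_kronecker, conjTranspose_transpose_eq_transpose_conjTranspose,
      ← choiMatrix_mulLeftRight_comp_comp] at this

end Channel

section Twirl

variable {G A B C : Type*} [Group G] [Fintype A] [DecidableEq A] [Fintype B] [DecidableEq B]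
  [Fintype C] [DecidableEq C]
  (u : G →* unitaryGroup A ℂ) (v : G →* unitaryGroup B ℂ) (w : G →* unitaryGroup C ℂ)

def conjByRep (g : G) (E : Matrix A A ℂ →ₗ[ℂ] Matrix B B ℂ) : Matrix A A ℂ →ₗ[ℂ] Matrix B B ℂ :=
  LinearMap.mulLeftRight ℂ ((v g : Matrix B B ℂ), (v g : Matrix B B ℂ)ᴴ) ∘ₗ E ∘ₗ
    LinearMap.mulLeftRight ℂ ((u g : Matrix A A ℂ)ᴴ, (u g : Matrix A A ℂ))

variable {u v w}

@[simp]
theorem conjByRep_apply (g : G) (E : Matrix A A ℂ →ₗ[ℂ] Matrix B B ℂ) (X : Matrix A A ℂ) :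
    conjByRep u v g E X =
      (v g : Matrix B B ℂ) * E ((u g : Matrix A A ℂ)ᴴ * X * (u g : Matrix A A ℂ)) *
        (v g : Matrix B B ℂ)ᴴ :=
  rfl

theorem IsCovariant.apply_conjTranspose_mul_mul {E : Matrix A A ℂ →ₗ[ℂ] Matrix B B ℂ}
    (hE : IsCovariant u v E) (g : G) (X : Matrix A A ℂ) :
    E ((u g : Matrix A A ℂ)ᴴ * X * (u g : Matrix A A ℂ)) =
      (v g : Matrix B B ℂ)ᴴ * E X * (v g : Matrix B B ℂ) := by
  simpa [star_eq_conjTranspose] using hE g⁻¹ X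

theorem conjByRep_mul (g h : G) (E : Matrix A A ℂ →ₗ[ℂ] Matrix B B ℂ) :
    conjByRep u v (g * h) E = conjByRep u v g (conjByRep u v h E) := by
  ext X : 1
  simp [Matrix.mul_assoc, conjTranspose_mul]

theorem isCovariant_iff_forall_conjByRep_eq {E : Matrix A A ℂ →ₗ[ℂ] Matrix B B ℂ} :
    IsCovariant u v E ↔ ∀ g, conjByRep u v g E = E := by
  refine ⟨fun hE g => ?_, fun hE g X => ?_⟩
  · ext X : 1
    rw [conjByRep_apply, hE.apply_conjTranspose_mul_mul]
    simp [Matrix.mul_assoc]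
  · conv_lhs => rw [← hE g]
    simp [Matrix.mul_assoc]

theorem IsCovariant.conjByRep_comp {E : Matrix A A ℂ →ₗ[ℂ] Matrix B B ℂ} (hE : IsCovariant u v E)
    (g : G) (R : Matrix B B ℂ →ₗ[ℂ] Matrix C C ℂ) :
    conjByRep v w g R ∘ₗ E = conjByRep u w g (R ∘ₗ E) := by
  ext X : 1
  simp [hE.apply_conjTranspose_mul_mul]

variable [MeasurableSpace G]

variable (u v) in
def twirl (μ : Measure G) (E : Matrix A A ℂ →ₗ[ℂ] Matrix B B ℂ) : Matrix A A ℂ →ₗ[ℂ] Matrix B B ℂ :=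
  LinearMap.integral μ fun g => conjByRep u v g E

variable [TopologicalSpace G] [OpensMeasurableSpace G] [CompactSpace G]
  {μ : Measure G}

theorem integrable_conjByRep_apply [IsFiniteMeasure μ]
    (hu : Continuous fun g => (u g : Matrix A A ℂ)) (hv : Continuous fun g => (v g : Matrix B B ℂ)) (E : Matrix A A ℂ →ₗ[ℂ] Matrix B B ℂ)
    (X : Matrix A A ℂ) : Integrable (fun g => conjByRep u v g E X) μ := by
  have hE : Continuous E := E.continuous_of_finiteDimensional
  refine Continuous.integrable_of_hasCompactSupport ?_ (.of_compactSpace _)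
  exact (hv.matrix_mul (hE.comp ((hu.matrix_conjTranspose.matrix_mul continuous_const).matrix_mul
    hu))).matrix_mul hv.matrix_conjTranspose

theorem twirl_apply [IsFiniteMeasure μ] (hu : Continuous fun g => (u g : Matrix A A ℂ))
    (hv : Continuous fun g => (v g : Matrix B B ℂ)) (E : Matrix A A ℂ →ₗ[ℂ] Matrix B B ℂ)
    (X : Matrix A A ℂ) : twirl u v μ E X = ∫ g, conjByRep u v g E X ∂μ :=
  LinearMap.integral_apply (integrable_conjByRep_apply hu hv E) X

theorem IsQuantumChannel.twirl [IsProbabilityMeasure μ]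
    (hu : Continuous fun g => (u g : Matrix A A ℂ)) (hv : Continuous fun g => (v g : Matrix B B ℂ))
    {E : Matrix A A ℂ →ₗ[ℂ] Matrix B B ℂ} (hE : IsQuantumChannel E) :
    IsQuantumChannel (twirl u v μ E) :=
  .integral (integrable_conjByRep_apply hu hv E) fun g => by
    simpa [conjByRep, star_eq_conjTranspose] using hE.mulLeftRight_comp_comp (u g)⁻¹ (v g)

theorem conjByRep_twirl [MeasurableMul G] [IsFiniteMeasure μ] [μ.IsMulLeftInvariant]
    (hu : Continuous fun g => (u g : Matrix A A ℂ)) (hv : Continuous fun g => (v g : Matrix B B ℂ))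
    (E : Matrix A A ℂ →ₗ[ℂ] Matrix B B ℂ) (h : G) :
    conjByRep u v h (twirl u v μ E) = twirl u v μ E := by
  ext X : 1
  rw [conjByRep_apply, twirl_apply hu hv, twirl_apply hu hv,
    ← LinearMap.mulLeftRight_apply (R := ℂ), ← LinearMap.integral_comp_comm _ (integrable_conjByRep_apply hu hv E _)]
  simp_rw [LinearMap.mulLeftRight_apply, ← conjByRep_apply, ← conjByRep_mul]
  exact integral_mul_left_eq_self (fun g => conjByRep u v g E X) h

theorem isCovariant_twirl [MeasurableMul G] [IsFiniteMeasure μ] [μ.IsMulLeftInvariant]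
    (hu : Continuous fun g => (u g : Matrix A A ℂ)) (hv : Continuous fun g => (v g : Matrix B B ℂ))
    (E : Matrix A A ℂ →ₗ[ℂ] Matrix B B ℂ) : IsCovariant u v (twirl u v μ E) :=
  isCovariant_iff_forall_conjByRep_eq.mpr (conjByRep_twirl hu hv E)

theorem IsCovariant.twirl_comp [IsFiniteMeasure μ] {E : Matrix A A ℂ →ₗ[ℂ] Matrix B B ℂ}
    (hE : IsCovariant u v E) (hu : Continuous fun g => (u g : Matrix A A ℂ))
    (hv : Continuous fun g => (v g : Matrix B B ℂ)) (hw : Continuous fun g => (w g : Matrix C C ℂ))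
    (R : Matrix B B ℂ →ₗ[ℂ] Matrix C C ℂ) :
    twirl v w μ R ∘ₗ E = twirl u w μ (R ∘ₗ E) := by
  ext X : 1
  rw [LinearMap.comp_apply, twirl_apply hv hw, twirl_apply hu hw]
  simp_rw [← LinearMap.comp_apply (conjByRep v w _ R), hE.conjByRep_comp]

end Twirl

section Fidelity

variable {L : Type*} [Fintype L]

def pureFidelity (Φ : Matrix L L ℂ →ₗ[ℂ] Matrix L L ℂ) (ψ : L → ℂ) : ℝ :=
  (star ψ ⬝ᵥ Φ (pureState ψ) *ᵥ ψ).re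

variable [DecidableEq L] {G : Type*} [Group G] {u : G →* unitaryGroup L ℂ}

theorem pureFidelity_conjByRep (g : G) (Φ : Matrix L L ℂ →ₗ[ℂ] Matrix L L ℂ) (ψ : L → ℂ) :
    pureFidelity (conjByRep u u g Φ) ψ = pureFidelity Φ ((u g : Matrix L L ℂ)ᴴ *ᵥ ψ) := by
  rw [pureFidelity, conjByRep_apply, dotProduct_mulVec_mul_mul_conjTranspose, pureFidelity]
  congr 4
  simpa using mul_pureState_mul_conjTranspose (u g : Matrix L L ℂ)ᴴ ψ

variable [TopologicalSpace G] [MeasurableSpace G] [OpensMeasurableSpace G] [CompactSpace G]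
  {μ : Measure G}

theorem pureFidelity_twirl [IsFiniteMeasure μ] (hu : Continuous fun g => (u g : Matrix L L ℂ))
    (Φ : Matrix L L ℂ →ₗ[ℂ] Matrix L L ℂ) (ψ : L → ℂ) :
    pureFidelity (twirl u u μ Φ) ψ = ∫ g, pureFidelity (conjByRep u u g Φ) ψ ∂μ := by
  have hint := integrable_conjByRep_apply (μ := μ) hu hu Φ (pureState ψ)
  rw [pureFidelity, twirl_apply hu hu, ← expectationₗ_apply,
    ← LinearMap.integral_comp_comm _ hint, ← RCLike.re_to_complex,
    ← integral_re ((expectationₗ ψ).integrable_comp hint)]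
  rfl

theorem le_pureFidelity_twirl [IsProbabilityMeasure μ]
    (hu : Continuous fun g => (u g : Matrix L L ℂ))
    {Φ : Matrix L L ℂ →ₗ[ℂ] Matrix L L ℂ} {c : ℝ}
    (hΦ : ∀ ψ, IsUnitVector ψ → c ≤ pureFidelity Φ ψ) {ψ : L → ℂ} (hψ : IsUnitVector ψ) :
    c ≤ pureFidelity (twirl u u μ Φ) ψ := by
  have hint : Integrable (fun g => pureFidelity (conjByRep u u g Φ) ψ) μ :=
    ((expectationₗ ψ).integrable_comp (integrable_conjByRep_apply hu hu Φ (pureState ψ))).re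
  rw [pureFidelity_twirl hu]
  calc c = ∫ _, c ∂μ := by simp
    _ ≤ _ := integral_mono (integrable_const c) hint fun g => ?_
  rw [pureFidelity_conjByRep]
  exact hΦ _ (hψ.mulVec (by simp))

end Fidelity

theorem isProbabilityMeasure_haarMeasure_top {G : Type*} [Group G] [TopologicalSpace G]
    [IsTopologicalGroup G] [CompactSpace G] [MeasurableSpace G] [BorelSpace G] :
    IsProbabilityMeasure (Measure.haarMeasure (⊤ : TopologicalSpace.PositiveCompacts G)) :=
  ⟨by simpa using Measure.haarMeasure_self (K₀ := (⊤ : TopologicalSpace.PositiveCompacts G))⟩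

theorem covariant_decoder_optimal_general
    {G : Type*} [Group G] [TopologicalSpace G] [IsTopologicalGroup G] [CompactSpace G]
    [MeasurableSpace G] [BorelSpace G]
    {L P' : Type*} [Fintype L] [DecidableEq L] [Fintype P'] [DecidableEq P']
    (uL : G →* Matrix.unitaryGroup L ℂ) (uP' : G →* Matrix.unitaryGroup P' ℂ)
    (huL : Continuous fun g => (uL g : Matrix L L ℂ))
    (huP' : Continuous fun g => (uP' g : Matrix P' P' ℂ))
    (Et : Matrix L L ℂ →ₗ[ℂ] Matrix P' P' ℂ)
    (hEtcov : IsCovariant uL uP' Et) (ε : ℝ)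
    (R : Matrix P' P' ℂ →ₗ[ℂ] Matrix L L ℂ) (hR : IsQuantumChannel R)
    (hRgood : ∀ ψ : L → ℂ, IsUnitVector ψ →
      (star ψ ⬝ᵥ (R (Et (pureState ψ))).mulVec ψ).re ≥ 1 - ε) :
    ∃ R' : Matrix P' P' ℂ →ₗ[ℂ] Matrix L L ℂ, IsQuantumChannel R' ∧
      IsCovariant uP' uL R' ∧
      ∀ ψ : L → ℂ, IsUnitVector ψ →
        (star ψ ⬝ᵥ (R' (Et (pureState ψ))).mulVec ψ).re ≥ 1 - ε := by
  let μ := Measure.haarMeasure (⊤ : TopologicalSpace.PositiveCompacts G)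
  have : IsProbabilityMeasure μ := isProbabilityMeasure_haarMeasure_top
  refine ⟨twirl uP' uL μ R, hR.twirl huP' huL, isCovariant_twirl huP' huL R, fun ψ hψ => ?_⟩
  have hfid := le_pureFidelity_twirl (μ := μ) huL (Φ := R ∘ₗ Et) hRgood hψ
  rwa [← hEtcov.twirl_comp huL huP' huL] at hfid

/-- **Lemma 3 (Optimality of covariant decoders).**
If a decoder achieves worst-case fidelity `1 - ε` against a `G`-covariant
encoder-plus-noise channel, then some `G`-covariant decoder achieves the same bound. -/
theorem covariant_decoder_optimal
    {G : Type*} [Group G] [TopologicalSpace G] [IsTopologicalGroup G] [CompactSpace G]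
    [MeasurableSpace G] [BorelSpace G]
    {L P' : Type*} [Fintype L] [DecidableEq L] [Fintype P'] [DecidableEq P']
    (uL : G →* Matrix.unitaryGroup L ℂ) (uP' : G →* Matrix.unitaryGroup P' ℂ)
    (huL : Continuous fun g => (uL g : Matrix L L ℂ))
    (huP' : Continuous fun g => (uP' g : Matrix P' P' ℂ))
    (Et : Matrix L L ℂ →ₗ[ℂ] Matrix P' P' ℂ) (hEt : IsQuantumChannel Et)
    (hEtcov : IsCovariant uL uP' Et) (ε : ℝ)
    (R : Matrix P' P' ℂ →ₗ[ℂ] Matrix L L ℂ) (hR : IsQuantumChannel R)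
    (hRgood : ∀ ψ : L → ℂ, IsUnitVector ψ →
      (star ψ ⬝ᵥ (R (Et (pureState ψ))).mulVec ψ).re ≥ 1 - ε) :
    ∃ R' : Matrix P' P' ℂ →ₗ[ℂ] Matrix L L ℂ, IsQuantumChannel R' ∧
      IsCovariant uP' uL R' ∧
      ∀ ψ : L → ℂ, IsUnitVector ψ →
        (star ψ ⬝ᵥ (R' (Et (pureState ψ))).mulVec ψ).re ≥ 1 - ε :=
  covariant_decoder_optimal_general uL uP' huL huP' Et hEtcov ε R hR hRgood

end
end

section
/- Multi-state approximate conversion in a convex resource theory via minimax (Proposition 5). Let A, B be finite types, let O be a nonempty, convex, compact set of quantum channels A → B (compact in the finite-dimensional space of linear maps Matrix A A ℂ →ₗ[ℂ] Matrix B B ℂ), let Λ be a compact topological space, let μ ↦ ρ_μ be a continuous family of states on A and μ ↦ φ_μ a continuous family of unit vectors on B, and let 0 ≤ ε ≤ 1. Then there exists a single channel E ∈ O with (star φ_μ ⬝ᵥ (E ρ_μ).mulVec φ_μ).re ≥ 1 − ε for all μ ∈ Λ, if and only if for every Borel probability measure p on Λ, sSup {∫ μ, (star φ_μ ⬝ᵥ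 (E ρ_μ).mulVec φ_μ).re ∂p | E ∈ O} ≥ 1 − ε. -/
/-! The forward direction is averaging: the fidelities are bounded on `O × Λ` by compactness, so
the supremum is an honest supremum. For the converse, suppose every `E ∈ O` fails at some `μ`.
The sets `{E | ⟨φ_μ, E(ρ_μ) φ_μ⟩ < 1 - ε}` are open and cover the compact set `O`, so finitely
many points `μ₁, …, μₙ` suffice. The fidelity vectors `(⟨φ_{μᵢ}, E(ρ_{μᵢ}) φ_{μᵢ}⟩)ᵢ` of `E ∈ O`
form a compact convex set disjoint from the closed convex orthant `[1 - ε, ∞)ⁿ`; a separating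
hyperplane has nonnegative normal, and normalizing it gives weights `wᵢ` such that under
`∑ wᵢ δ_{μᵢ}` the average fidelity of every `E ∈ O` stays below some `d < 1 - ε`. -/

open scoped Kronecker ComplexOrder
open Matrix MeasureTheory

noncomputable section

lemma LinearMap.apply_single_nonneg_of_forall_lt {ι : Type*} [DecidableEq ι]
    (f : (ι → ℝ) →ₗ[ℝ] ℝ) {q : ι → ℝ} {v : ℝ} (h : ∀ x, q ≤ x → v < f x) (i : ι) :
    0 ≤ f (Pi.single i 1) := by
  by_contra! hi
  set m := (f q - v) / -f (Pi.single i 1)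
  have hm : 0 ≤ m := div_nonneg (sub_nonneg.2 (h q le_rfl).le) (neg_nonneg.2 hi.le)
  have := h (q + m • Pi.single i 1)
    (le_add_of_nonneg_right (smul_nonneg hm (Pi.single_nonneg.2 zero_le_one)))
  have hma : m * f (Pi.single i 1) = v - f q := by
    simp only [m]
    rw [div_neg, neg_mul, div_mul_cancel₀ _ hi.ne]
    ring
  rw [map_add, map_smul, smul_eq_mul, hma] at this
  linarith

lemma exists_stdSimplex_forall_sum_mul_le {ι : Type*} [Fintype ι] {S : Set (ι → ℝ)}
    (hS : IsCompact S) (hSc : Convex ℝ S) (hSne : S.Nonempty) {c : ℝ}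
    (h : ∀ s ∈ S, ∃ i, s i < c) :
    ∃ w ∈ stdSimplex ℝ ι, ∃ d < c, ∀ s ∈ S, ∑ i, w i * s i ≤ d := by
  classical
  have hSQ : Disjoint S (Set.Ici fun _ => c) := Set.disjoint_left.2 fun s hs hsQ =>
    let ⟨i, hi⟩ := h s hs; (hsQ i).not_gt hi
  obtain ⟨f, u, v, hfS, huv, hfQ⟩ :=
    geometric_hahn_banach_compact_closed hSc hS (convex_Ici _) isClosed_Ici hSQ
  set a : ι → ℝ := fun i => f (Pi.single i 1)
  have ha : ∀ i, 0 ≤ a i := f.toLinearMap.apply_single_nonneg_of_forall_lt fun x hx => hfQ x hx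
  have hf : ∀ x, f x = ∑ i, x i * a i := fun x => by
    refine (f.toLinearMap.pi_apply_eq_sum_univ x).trans (Finset.sum_congr rfl fun i _ => ?_)
    simp only [a, smul_eq_mul, ContinuousLinearMap.coe_coe]
    congr 2
    ext j
    simp [Pi.single_apply, eq_comm]
  set T := ∑ i, a i
  have hcT : v < c * T := by simpa [hf, T, Finset.mul_sum] using hfQ _ Set.self_mem_Ici
  have hT : 0 < T := by
    obtain ⟨s, hs⟩ := hSne
    refine (Finset.sum_nonneg fun i _ => ha i).lt_of_ne fun hT0 => ?_
    have hfs : f s = 0 := by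
      simp [hf, (Finset.sum_eq_zero_iff_of_nonneg fun i _ => ha i).1 hT0.symm]
    rw [show T = 0 from hT0.symm, mul_zero] at hcT
    linarith [hfS s hs]
  refine ⟨fun i => a i / T, ⟨fun i => div_nonneg (ha i) hT.le, ?_⟩, u / T, ?_, fun s hs => ?_⟩
  · rw [← Finset.sum_div, div_self hT.ne']
  · rw [div_lt_iff₀ hT]; linarith
  calc ∑ i, a i / T * s i = f s / T := by
        rw [hf, Finset.sum_div]; exact Finset.sum_congr rfl fun i _ => by ring
    _ ≤ u / T := div_le_div_of_nonneg_right (hfS s hs).le hT.le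

section
variable {Λ : Type*} [MeasurableSpace Λ] {ι : Type*} [Fintype ι] (x : ι → Λ) {w : ι → ℝ}

lemma isProbabilityMeasure_sum_ofReal_smul_dirac (hw : w ∈ stdSimplex ℝ ι) :
    IsProbabilityMeasure (Measure.sum fun i => ENNReal.ofReal (w i) • Measure.dirac (x i)) :=
  (hw.2 ▸ hasSum_fintype w).isProbabilityMeasure_sum_dirac hw.1

lemma integral_sum_ofReal_smul_dirac {E : Type*} [NormedAddCommGroup E] [NormedSpace ℝ E]
    [CompleteSpace E] (hw : ∀ i, 0 ≤ w i) {f : Λ → E} (hf : StronglyMeasurable f) :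
    ∫ μ, f μ ∂(Measure.sum fun i => ENNReal.ofReal (w i) • Measure.dirac (x i)) =
      ∑ i, w i • f (x i) := by
  rw [Measure.sum_fintype, integral_finsetSum_measure fun i _ =>
    (integrable_dirac' hf (by simp)).smul_measure ENNReal.ofReal_ne_top]
  refine Finset.sum_congr rfl fun i _ => ?_
  rw [integral_smul_measure, integral_dirac' _ _ hf, ENNReal.toReal_ofReal (hw i)]
end

theorem exists_isProbabilityMeasure_forall_integral_le {W Λ : Type*} [AddCommMonoid W]
    [Module ℝ W] [TopologicalSpace W] [MeasurableSpace Λ] {K : Set W} (hK : IsCompact K)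
    (hKc : Convex ℝ K) (hKne : K.Nonempty) (ℓ : Λ → W →L[ℝ] ℝ)
    (hℓ : ∀ g ∈ K, Measurable fun μ => ℓ μ g) {c : ℝ} (h : ∀ g ∈ K, ∃ μ, ℓ μ g < c) :
    ∃ p : Measure Λ, IsProbabilityMeasure p ∧ ∃ d < c, ∀ g ∈ K, ∫ μ, ℓ μ g ∂p ≤ d := by
  obtain ⟨t, ht⟩ := hK.elim_finite_subcover (fun μ => {g | ℓ μ g < c})
    (fun μ => isOpen_lt (ℓ μ).continuous continuous_const)
    (fun g hg => Set.mem_iUnion.2 (h g hg))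
  let L : W →L[ℝ] (t → ℝ) := ContinuousLinearMap.pi fun i => ℓ i
  have hLK : ∀ s ∈ L '' K, ∃ i, s i < c := by
    rintro _ ⟨g, hg, rfl⟩
    obtain ⟨μ, hμ, hg⟩ := Set.mem_iUnion₂.1 (ht hg)
    exact ⟨⟨μ, hμ⟩, hg⟩
  obtain ⟨w, hw, d, hdc, hd⟩ := exists_stdSimplex_forall_sum_mul_le (hK.image L.continuous)
    (hKc.linear_image L.toLinearMap) (hKne.image L) hLK
  refine ⟨_, isProbabilityMeasure_sum_ofReal_smul_dirac (fun i : t => (i : Λ)) hw, d, hdc,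
    fun g hg => ?_⟩
  rw [integral_sum_ofReal_smul_dirac _ hw.1 (hℓ g hg).stronglyMeasurable]
  exact hd _ ⟨g, hg, rfl⟩

section
variable {A N : Type*} [Fintype A] [DecidableEq A] [AddCommMonoid N] [Module ℂ N]

lemma LinearMap.apply_eq_sum_single (E : Matrix A A ℂ →ₗ[ℂ] N) (X : Matrix A A ℂ) :
    E X = ∑ i, ∑ j, X i j • E (Matrix.single i j 1) := by
  conv_lhs => rw [X.matrix_eq_sum_single]
  simp only [map_sum, ← map_smul, Matrix.smul_single, smul_eq_mul, mul_one]

-- Evaluation is not jointly continuous on all functions, but on linear maps it factors through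
-- the finitely many values `E (single i j 1)`.
lemma isCompact_image2_apply [TopologicalSpace N] [ContinuousAdd N] [ContinuousSMul ℂ N]
    {O : Set (Matrix A A ℂ →ₗ[ℂ] N)} (hO : IsCompact (DFunLike.coe '' O : Set (Matrix A A ℂ → N)))
    {L : Set (Matrix A A ℂ)} (hL : IsCompact L) :
    IsCompact (Set.image2 (fun E X => E X) O L) := by
  have hcont : Continuous fun p : (Matrix A A ℂ → N) × Matrix A A ℂ =>
      ∑ i, ∑ j, p.2 i j • p.1 (Matrix.single i j 1) := by fun_prop
  convert (hO.prod hL).image hcont using 1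
  ext M
  constructor
  · rintro ⟨E, hE, X, hX, rfl⟩
    exact ⟨(⇑E, X), ⟨⟨E, hE, rfl⟩, hX⟩, (E.apply_eq_sum_single X).symm⟩
  · rintro ⟨⟨_, X⟩, ⟨⟨E, hE, rfl⟩, hX⟩, rfl⟩
    exact ⟨E, hE, X, hX, E.apply_eq_sum_single X⟩
end

lemma exists_forall_fidelity_le {A B Λ : Type*} [Fintype A] [DecidableEq A] [Fintype B]
    [TopologicalSpace Λ] [CompactSpace Λ] {O : Set (Matrix A A ℂ →ₗ[ℂ] Matrix B B ℂ)}
    (hO : IsCompact (DFunLike.coe '' O : Set (Matrix A A ℂ → Matrix B B ℂ)))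
    {ρ : Λ → Matrix A A ℂ} (hρ : Continuous ρ) {φ : Λ → B → ℂ} (hφ : Continuous φ) :
    ∃ C, ∀ E ∈ O, ∀ μ, (star (φ μ) ⬝ᵥ (E (ρ μ)).mulVec (φ μ)).re ≤ C := by
  have hK := (isCompact_image2_apply hO (isCompact_range hρ)).prod (isCompact_univ (X := Λ))
  have hcont : Continuous fun p : Matrix B B ℂ × Λ => (star (φ p.2) ⬝ᵥ p.1.mulVec (φ p.2)).re := by
    fun_prop
  obtain ⟨C, hC⟩ := hK.bddAbove_image hcont.continuousOn
  exact ⟨C, fun E hE μ => hC ⟨(E (ρ μ), μ), ⟨⟨E, hE, ρ μ, ⟨μ, rfl⟩, rfl⟩, trivial⟩, rfl⟩⟩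

-- Defined on all functions so that it is continuous in the topology in which `O` is compact.
def fidelityCLM {A B : Type*} [Fintype B] (X : Matrix A A ℂ) (v : B → ℂ) :
    (Matrix A A ℂ → Matrix B B ℂ) →L[ℝ] ℝ where
  toFun g := (star v ⬝ᵥ (g X).mulVec v).re
  map_add' g h := by simp [Matrix.add_mulVec]
  map_smul' r g := by simp [Matrix.smul_mulVec]
  cont := by fun_prop

theorem multi_state_conversion_minimax_general
    {A B : Type*} [Fintype A] [DecidableEq A] [Fintype B]
    (O : Set (Matrix A A ℂ →ₗ[ℂ] Matrix B B ℂ))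
    (hne : O.Nonempty) (hconv : Convex ℝ O)
    (hcpt : IsCompact (DFunLike.coe '' O : Set (Matrix A A ℂ → Matrix B B ℂ)))
    {Λ : Type*} [TopologicalSpace Λ] [CompactSpace Λ] [MeasurableSpace Λ] [BorelSpace Λ]
    (ρ : Λ → Matrix A A ℂ) (hρc : Continuous ρ)
    (φ : Λ → B → ℂ) (hφc : Continuous φ)
    (ε : ℝ) :
    (∃ E ∈ O, ∀ μ, (star (φ μ) ⬝ᵥ (E (ρ μ)).mulVec (φ μ)).re ≥ 1 - ε) ↔
      ∀ p : Measure Λ, IsProbabilityMeasure p →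
        sSup {r : ℝ | ∃ E ∈ O,
          r = ∫ μ, (star (φ μ) ⬝ᵥ (E (ρ μ)).mulVec (φ μ)).re ∂p} ≥ 1 - ε := by
  have hfid (E : Matrix A A ℂ →ₗ[ℂ] Matrix B B ℂ) :
      Continuous fun μ => (star (φ μ) ⬝ᵥ (E (ρ μ)).mulVec (φ μ)).re := by
    have := E.continuous_of_finiteDimensional
    fun_prop
  constructor
  · rintro ⟨E, hE, hfidE⟩ p hp
    have hint (E) := (BoundedContinuousFunction.mkOfCompact ⟨_, hfid E⟩).integrable p
    obtain ⟨C, hC⟩ := exists_forall_fidelity_le hcpt hρc hφc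
    refine le_csSup_of_le ⟨C, ?_⟩ ⟨E, hE, rfl⟩ ?_
    · rintro _ ⟨E', hE', rfl⟩
      simpa using integral_mono (hint E') (integrable_const C) (hC E' hE')
    · simpa using integral_mono (integrable_const (1 - ε)) (hint E) hfidE
  · intro H
    by_contra! hno
    obtain ⟨p, hp, d, hdε, hpd⟩ := exists_isProbabilityMeasure_forall_integral_le hcpt
      (hconv.is_linear_image ⟨fun _ _ => rfl, fun _ _ => rfl⟩) (hne.image _)
      (fun μ => fidelityCLM (ρ μ) (φ μ)) (fun _ ⟨E, _, hE⟩ => hE ▸ (hfid E).measurable)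
      (fun _ ⟨E, hE, hEg⟩ => hEg ▸ hno E hE)
    have hsup : sSup {r : ℝ | ∃ E ∈ O,
        r = ∫ μ, (star (φ μ) ⬝ᵥ (E (ρ μ)).mulVec (φ μ)).re ∂p} ≤ d :=
      csSup_le (hne.elim fun E hE => ⟨_, E, hE, rfl⟩) fun _ ⟨E, hE, hr⟩ =>
        hr ▸ hpd _ ⟨E, hE, rfl⟩
    linarith [H p hp]

/-- **Proposition 5 (Multi-state approximate conversion via minimax).**
There is a single free channel converting every `ρ_μ` to within fidelity `1 - ε` of the
pure state of `φ_μ` iff for every Borel probability measure `p` on `Λ` the supremum over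
free channels of the `p`-averaged fidelity is at least `1 - ε`. -/
theorem multi_state_conversion_minimax
    {A B : Type*} [Fintype A] [DecidableEq A] [Fintype B] [DecidableEq B]
    (O : Set (Matrix A A ℂ →ₗ[ℂ] Matrix B B ℂ))
    (hne : O.Nonempty) (hconv : Convex ℝ O)
    (hcpt : IsCompact (DFunLike.coe '' O : Set (Matrix A A ℂ → Matrix B B ℂ)))
    (hch : ∀ E ∈ O, IsQuantumChannel E)
    {Λ : Type*} [TopologicalSpace Λ] [CompactSpace Λ] [MeasurableSpace Λ] [BorelSpace Λ]
    (ρ : Λ → Matrix A A ℂ) (hρ : ∀ μ, IsState (ρ μ)) (hρc : Continuous ρ)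
    (φ : Λ → B → ℂ) (hφ : ∀ μ, IsUnitVector (φ μ)) (hφc : Continuous φ)
    (ε : ℝ) (hε0 : 0 ≤ ε) (hε1 : ε ≤ 1) :
    (∃ E ∈ O, ∀ μ, (star (φ μ) ⬝ᵥ (E (ρ μ)).mulVec (φ μ)).re ≥ 1 - ε) ↔
      ∀ p : Measure Λ, IsProbabilityMeasure p →
        sSup {r : ℝ | ∃ E ∈ O,
          r = ∫ μ, (star (φ μ) ⬝ᵥ (E (ρ μ)).mulVec (φ μ)).re ∂p} ≥ 1 - ε :=
  multi_state_conversion_minimax_general O hne hconv hcpt ρ hρc φ hφc ε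

end
end

section
/- Partial trace of W-code codeword dyads (equation (D4)). Fix d ≥ 1 and n ≥ 1, and model n+1 physical subsystems as Fin (d+1) × (Fin n → Fin (d+1)). Let w_i^{(n+1)} and w_i^{(n)} be the W-code codewords on n+1 and n subsystems respectively, and let D : (Fin n → Fin (d+1)) → ℂ be D x := if (∀ b, x b = ⊤) then 1 else 0. Then for all i, j : Fin d, ptrA (Matrix.vecMulVec (w_i^{(n+1)}) (star (w_j^{(n+1)}))) = (if i = j then ((n+1 : ℂ))⁻¹ else 0) • Matrix.vecMulVec D (star D) + ((n : ℂ)/(n+1)) • Matrix.vecMulVec (w_i^{(n)}) (star (w_j^{(n)})), where ptrA is the partial trace over the first factor Fin (d+1). -/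
open scoped Kronecker ComplexOrder
open Matrix MeasureTheory

noncomputable section

/-- Partial trace over the first factor. -/
def ptrA {A B : Type*} [Fintype A] (M : Matrix (A × B) (A × B) ℂ) : Matrix B B ℂ :=
  Matrix.of fun b b' => ∑ a, M (a, b) (a, b')

/-- W-code codeword `w_i^{(n)}` on `n` physical subsystems of local dimension `d+1`. -/
def wVec (d n : ℕ) (i : Fin d) : (Fin n → Fin (d + 1)) → ℂ := fun x =>
  if ∃ a : Fin n, x a = Fin.castSucc i ∧ ∀ b, b ≠ a → x b = Fin.last d
    then ((1 / Real.sqrt n : ℝ) : ℂ) else 0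

/-- W-code codeword on `n+1` subsystems, modeled as `Fin (d+1) × (Fin n → Fin (d+1))`. -/
def wVecSucc (d n : ℕ) (i : Fin d) : (Fin (d + 1) × (Fin n → Fin (d + 1))) → ℂ := fun kx =>
  if (kx.1 = Fin.castSucc i ∧ ∀ b, kx.2 b = Fin.last d) ∨
      (kx.1 = Fin.last d ∧ ∃ a, kx.2 a = Fin.castSucc i ∧ ∀ b, b ≠ a → kx.2 b = Fin.last d)
    then ((1 / Real.sqrt (n + 1) : ℝ) : ℂ) else 0

/-- Indicator vector of the all-⊤ configuration. -/
def allTop (d n : ℕ) : (Fin n → Fin (d + 1)) → ℂ := fun x =>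
  if ∀ b, x b = Fin.last d then 1 else 0

/-! The partial trace of a dyad `|u⟩⟨v|` over the first factor is the sum over `k` of the dyads
of the slices `u (k, ·)` and `v (k, ·)`. For the codeword `w_i^{(n+1)}` the slice at
`k = castSucc i'` is `δ_{i i'} / √(n+1)` times the all-`⊤` vector, and the slice at `k = ⊤` is
`√(n/(n+1)) · w_i^{(n)}`; summing the resulting dyads gives the two terms. -/

lemma ptrA_vecMulVec_star {A B : Type*} [Fintype A] (u v : A × B → ℂ) :
    ptrA (vecMulVec u (star v)) = ∑ a, vecMulVec (fun b => u (a, b)) (star fun b => v (a, b)) := by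
  ext b b'
  simp [ptrA, vecMulVec_apply, Matrix.sum_apply]

lemma sum_vecMulVec_ite_star {ι m α : Type*} [Fintype ι] [DecidableEq ι]
    [NonUnitalNonAssocSemiring α] [StarAddMonoid α] (i j : ι) (u v : m → α) :
    ∑ k, vecMulVec (if k = i then u else 0) (star (if k = j then v else 0)) =
      if i = j then vecMulVec u (star v) else 0 := by
  split_ifs with hij
  · subst hij
    rw [Finset.sum_eq_single i (fun k _ hk => by simp [hk]) (by simp)]
    simp
  · refine Finset.sum_eq_zero fun k _ => ?_
    by_cases hk : k = i
    · simp [hk, hij]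
    · simp [hk]

lemma vecMulVec_real_smul_star {m : Type*} (r s : ℝ) (u v : m → ℂ) :
    vecMulVec (r • u) (star (s • v)) = ((r * s : ℝ) : ℂ) • vecMulVec u (star v) := by
  ext x y
  simp [vecMulVec_apply, Complex.real_smul]
  ring

lemma wVecSucc_castSucc (d n : ℕ) (i k : Fin d) :
    (fun x => wVecSucc d n i (Fin.castSucc k, x)) =
      if k = i then (1 / √(n + 1)) • allTop d n else 0 := by
  ext x
  split_ifs with hki
  · subst hki
    simp [wVecSucc, allTop, (Fin.castSucc_lt_last k).ne, Complex.real_smul]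
  · simp [wVecSucc, hki, (Fin.castSucc_lt_last k).ne]

lemma wVecSucc_last (d n : ℕ) (i : Fin d) :
    (fun x => wVecSucc d n i (Fin.last d, x)) =
      (√n / √(n + 1)) • wVec d n i := by
  ext x
  by_cases hx : ∃ a, x a = Fin.castSucc i ∧ ∀ b, b ≠ a → x b = Fin.last d
  · have hn : (0 : ℝ) < √n := by
      obtain ⟨a, -⟩ := hx
      exact Real.sqrt_pos.2 (Nat.cast_pos.2 a.pos)
    simp only [wVecSucc, wVec, hx, (Fin.castSucc_lt_last i).ne', Pi.smul_apply,
      Complex.real_smul, false_and, and_self, or_true, if_true, ← Complex.ofReal_mul]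
    congr 1
    field_simp
  · simp [wVecSucc, wVec, hx, (Fin.castSucc_lt_last i).ne']

theorem wcode_ptr_dyad_general
    (d n : ℕ) (i j : Fin d) :
    ptrA (Matrix.vecMulVec (wVecSucc d n i) (star (wVecSucc d n j))) =
      (if i = j then ((n + 1 : ℂ))⁻¹ else 0) •
          Matrix.vecMulVec (allTop d n) (star (allTop d n)) +
        ((n : ℂ) / (n + 1)) • Matrix.vecMulVec (wVec d n i) (star (wVec d n j)) := by
  simp only [ptrA_vecMulVec_star, Fin.sum_univ_castSucc, wVecSucc_castSucc, wVecSucc_last]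
  rw [sum_vecMulVec_ite_star, vecMulVec_real_smul_star, vecMulVec_real_smul_star]
  have hn1 : (0 : ℝ) ≤ n + 1 := by positivity
  have hallTop_coeff : ((1 / √(n + 1) * (1 / √(n + 1)) : ℝ) : ℂ) = ((n + 1 : ℂ))⁻¹ := by
    rw [div_mul_div_comm, Real.mul_self_sqrt hn1]
    push_cast
    ring
  have hwVec_coeff : ((√n / √(n + 1) * (√n / √(n + 1)) : ℝ) : ℂ) = n / (n + 1) := by
    rw [div_mul_div_comm, Real.mul_self_sqrt n.cast_nonneg, Real.mul_self_sqrt hn1]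
    push_cast
    ring
  rw [hallTop_coeff, hwVec_coeff, ite_smul, zero_smul]

/-- **Partial trace of W-code codeword dyads (equation (D4)).**
Tracing out one subsystem of an `(n+1)`-subsystem W-code dyad yields a mixture of the
all-⊤ dyad and the `n`-subsystem W-code dyad. -/
theorem wcode_ptr_dyad
    (d n : ℕ) (hd : 1 ≤ d) (hn : 1 ≤ n) (i j : Fin d) :
    ptrA (Matrix.vecMulVec (wVecSucc d n i) (star (wVecSucc d n j))) =
      (if i = j then ((n + 1 : ℂ))⁻¹ else 0) •
          Matrix.vecMulVec (allTop d n) (star (allTop d n)) +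
        ((n : ℂ) / (n + 1)) • Matrix.vecMulVec (wVec d n i) (star (wVec d n j)) :=
  wcode_ptr_dyad_general d n i j

end
end

section
/- Erasure of a W-code encoded pure state (equation (33)). Fix d ≥ 1, n ≥ 2 and 1 ≤ N_e < n, and set m := n − N_e. Model the physical space as (Fin N_e → Fin (d+1)) × (Fin m → Fin (d+1)). For any unit vector c : Fin d → ℂ let Ψ := ∑ i, c i • w_i^{(n)} be the encoded vector on n subsystems and Ψ' := ∑ i, c i • w_i^{(m)} the encoded vector on m subsystems, and let D : (Fin m → Fin (d+1)) → ℂ be D y := if (∀ b, y b = ⊤) then 1 else 0. Then ptrA (Matrix.vecMulVec Ψ (star Ψ)) = ((N_e : ℂ)/n) • Matrix.vecMulVec D (star D) + (1 − (N_e : ℂ)/n) • Matrix.vecMulVec Ψ' (star Ψ'), where ptrA is the partial trace over the first factor (the erased subsystems). -/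
open scoped Kronecker ComplexOrder
open Matrix MeasureTheory

noncomputable section

/-- W-code codeword on `Ne + m` subsystems, transported along `Fin (Ne + m) ≃ Fin Ne ⊕ Fin m`
to the split physical space. -/
def wSplit (d Ne m : ℕ) (i : Fin d) :
    ((Fin Ne → Fin (d + 1)) × (Fin m → Fin (d + 1))) → ℂ := fun x =>
  wVec d (Ne + m) i fun a => Sum.elim x.1 x.2 (finSumFinEquiv.symm a)

/-! A W-codeword on `Ne + m` sites splits as `(u_i ⊗ |⊤⟩ + |⊤⟩ ⊗ u_i) / √n`, where `u_i` is the
sum of the `k` one-hot configurations of colour `i` on a block of `k` sites. On the erased block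
the components `∑ i, c i • u_i` and `|⊤⟩` are orthogonal, so the partial trace is the mixture of
the two remaining pure states weighted by their squared norms `Ne` and `1`, out of `n`. -/

section OneHot

variable {ι κ V : Type*} {v w : V}

def IsOneHot (v w : V) (x : ι → V) : Prop :=
  ∃ a, x a = v ∧ ∀ b, b ≠ a → x b = w

theorem IsOneHot.not_forall_eq (hvw : v ≠ w) {x : ι → V} (hx : IsOneHot v w x) :
    ¬∀ a, x a = w := by
  obtain ⟨a, ha, -⟩ := hx
  exact fun h => hvw (ha.symm.trans (h a))

theorem IsOneHot.eq_of_isOneHot {v' : V} (hvw : v ≠ w) {x : ι → V} (hx : IsOneHot v w x)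
    (hx' : IsOneHot v' w x) : v = v' := by
  obtain ⟨a, ha, hb⟩ := hx
  obtain ⟨a', ha', hb'⟩ := hx'
  obtain rfl | hne := eq_or_ne a a'
  · exact ha.symm.trans ha'
  · exact absurd (ha.symm.trans (hb' a hne)) hvw

theorem isOneHot_iff_exists_update [DecidableEq ι] {x : ι → V} :
    IsOneHot v w x ↔ ∃ a, Function.update (fun _ => w) a v = x := by
  simp only [IsOneHot, Function.update_eq_iff, @eq_comm _ v, @eq_comm _ w]

theorem isOneHot_comp_equiv (e : κ ≃ ι) {x : ι → V} :
    IsOneHot v w (x ∘ e) ↔ IsOneHot v w x := by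
  simp only [IsOneHot, Function.comp_apply, e.exists_congr_left, e.forall_congr_left,
    Equiv.apply_symm_apply, ne_eq, e.symm_apply_eq]

theorem isOneHot_sumElim (x : ι → V) (y : κ → V) :
    IsOneHot v w (Sum.elim x y) ↔
      IsOneHot v w x ∧ (∀ b, y b = w) ∨ (∀ a, x a = w) ∧ IsOneHot v w y := by
  simp only [IsOneHot, Sum.exists, Sum.forall, Sum.elim_inl, Sum.elim_inr, ne_eq,
    Sum.inl.injEq, Sum.inr.injEq, reduceCtorEq, not_false_eq_true, forall_const]
  aesop

theorem card_isOneHot [Fintype ι] [DecidableEq ι] [Fintype V]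
    [DecidablePred (IsOneHot (ι := ι) v w)] (hvw : v ≠ w) :
    (Finset.univ.filter (IsOneHot (ι := ι) v w)).card = Fintype.card ι := by
  classical
  have hinj : Function.Injective fun a : ι => Function.update (fun _ => w) a v := by
    intro a a' h
    by_contra hne
    simpa [Function.update_of_ne hne, hvw] using congrFun h a
  have himage : Finset.univ.filter (IsOneHot (ι := ι) v w) =
      Finset.univ.image fun a => Function.update (fun _ => w) a v := by
    ext x
    simp [isOneHot_iff_exists_update]
  rw [himage, Finset.card_image_of_injective _ hinj, Finset.card_univ]

end OneHot

theorem ptrA_vecMulVec_add_of_orthogonal {A B : Type*} [Fintype A] (f₁ f₂ : A → ℂ)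
    (g₁ g₂ : B → ℂ) (h : star f₂ ⬝ᵥ f₁ = 0) :
    ptrA (vecMulVec (fun p : A × B => f₁ p.1 * g₁ p.2 + f₂ p.1 * g₂ p.2)
        (star fun p : A × B => f₁ p.1 * g₁ p.2 + f₂ p.1 * g₂ p.2)) =
      (star f₁ ⬝ᵥ f₁) • vecMulVec g₁ (star g₁) + (star f₂ ⬝ᵥ f₂) • vecMulVec g₂ (star g₂) := by
  have h' : star f₁ ⬝ᵥ f₂ = 0 := by rw [star_dotProduct, h, star_zero]
  ext b b'
  simp only [dotProduct, Pi.star_apply] at h h' ⊢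
  have hexpand : ∀ a, (f₁ a * g₁ b + f₂ a * g₂ b) * star (f₁ a * g₁ b' + f₂ a * g₂ b') =
      star (f₁ a) * f₁ a * (g₁ b * star (g₁ b')) + star (f₂ a) * f₁ a * (g₁ b * star (g₂ b')) +
        star (f₁ a) * f₂ a * (g₂ b * star (g₁ b')) + star (f₂ a) * f₂ a * (g₂ b * star (g₂ b')) := by
    intro a
    simp only [star_add, star_mul']
    ring
  simp only [ptrA, of_apply, vecMulVec_apply, Pi.star_apply, Matrix.add_apply,
    Matrix.smul_apply, smul_eq_mul, hexpand, Finset.sum_add_distrib, ← Finset.sum_mul, h, h']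
  ring

theorem vecMulVec_ofReal_smul_star {S : Type*} (r : ℝ) (v : S → ℂ) :
    vecMulVec ((r : ℂ) • v) (star ((r : ℂ) • v)) = ((r ^ 2 : ℝ) : ℂ) • vecMulVec v (star v) := by
  rw [star_smul, smul_vecMulVec, vecMulVec_smul, smul_smul, Complex.star_def, Complex.conj_ofReal]
  push_cast
  ring_nf

theorem IsUnitVector.star_dotProduct_self {S : Type*} [Fintype S] {c : S → ℂ}
    (hc : IsUnitVector c) : star c ⬝ᵥ c = 1 := by
  simp only [dotProduct, Pi.star_apply, Complex.star_def, Complex.conj_mul']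
  exact_mod_cast hc

theorem ofReal_one_div_sqrt_sq (k : ℕ) : (((1 / Real.sqrt k) ^ 2 : ℝ) : ℂ) = 1 / k := by
  rw [div_pow, Real.sq_sqrt k.cast_nonneg]
  push_cast
  ring

section WCode

variable (d : ℕ)

open Classical in
def oneHotVec (k : ℕ) (i : Fin d) : (Fin k → Fin (d + 1)) → ℂ := fun x =>
  if IsOneHot (Fin.castSucc i) (Fin.last d) x then 1 else 0

def oneHotSum (k : ℕ) (c : Fin d → ℂ) : (Fin k → Fin (d + 1)) → ℂ :=
  ∑ i, c i • oneHotVec d k i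

variable {d}

theorem star_oneHotVec (k : ℕ) (i : Fin d) : star (oneHotVec d k i) = oneHotVec d k i := by
  ext x
  simp only [oneHotVec, Pi.star_apply]
  split_ifs <;> simp

theorem star_allTop (k : ℕ) : star (allTop d k) = allTop d k := by
  ext x
  simp only [allTop, Pi.star_apply]
  split_ifs <;> simp

theorem star_oneHotVec_dotProduct (k : ℕ) (i j : Fin d) :
    star (oneHotVec d k i) ⬝ᵥ oneHotVec d k j = if i = j then (k : ℂ) else 0 := by
  classical
  rw [star_oneHotVec]
  split_ifs with hij
  · subst hij
    simp only [dotProduct, oneHotVec, boole_mul, ← ite_and, and_self, Finset.sum_boole,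
      card_isOneHot (Fin.castSucc_ne_last i), Fintype.card_fin]
  · refine Finset.sum_eq_zero fun x _ => ?_
    simp only [oneHotVec, mul_ite, mul_one, mul_zero]
    split_ifs with hj hi <;> try rfl
    exact absurd (Fin.castSucc_injective _ (hi.eq_of_isOneHot (Fin.castSucc_ne_last i) hj)) hij

theorem star_allTop_dotProduct_oneHotVec (k : ℕ) (i : Fin d) :
    star (allTop d k) ⬝ᵥ oneHotVec d k i = 0 := by
  refine Finset.sum_eq_zero fun x _ => ?_
  simp only [Pi.star_apply, allTop, oneHotVec]
  split_ifs with htop hi <;> try simp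
  exact hi.not_forall_eq (Fin.castSucc_ne_last i) htop

theorem star_allTop_dotProduct_self (k : ℕ) : star (allTop d k) ⬝ᵥ allTop d k = 1 := by
  rw [star_allTop]
  simp [dotProduct, allTop, ← funext_iff]

theorem star_oneHotSum_dotProduct_self (k : ℕ) (c : Fin d → ℂ) :
    star (oneHotSum d k c) ⬝ᵥ oneHotSum d k c = k * (star c ⬝ᵥ c) := by
  rw [oneHotSum, star_sum]
  simp only [star_smul, sum_dotProduct, dotProduct_sum, smul_dotProduct, dotProduct_smul,
    star_oneHotVec_dotProduct]
  simp only [smul_eq_mul, mul_ite, mul_zero, Finset.sum_ite_eq', Finset.mem_univ, if_true,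
    dotProduct, Pi.star_apply, Finset.mul_sum]
  exact Finset.sum_congr rfl fun i _ => by ring

theorem star_allTop_dotProduct_oneHotSum (k : ℕ) (c : Fin d → ℂ) :
    star (allTop d k) ⬝ᵥ oneHotSum d k c = 0 := by
  simp [oneHotSum, dotProduct_sum, star_allTop_dotProduct_oneHotVec]

theorem wVec_eq_smul (k : ℕ) (i : Fin d) :
    wVec d k i = ((1 / Real.sqrt k : ℝ) : ℂ) • oneHotVec d k i := by
  ext x
  classical
  simp only [wVec, oneHotVec, Pi.smul_apply, smul_eq_mul, mul_ite, mul_one, mul_zero]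
  exact if_congr Iff.rfl rfl rfl

theorem sum_smul_wVec (k : ℕ) (c : Fin d → ℂ) :
    ∑ i, c i • wVec d k i = ((1 / Real.sqrt k : ℝ) : ℂ) • oneHotSum d k c := by
  simp only [wVec_eq_smul, oneHotSum, Finset.smul_sum, smul_comm (c _)]

theorem oneHotVec_sumElim (Ne m : ℕ) (i : Fin d) (x : Fin Ne → Fin (d + 1))
    (y : Fin m → Fin (d + 1)) :
    oneHotVec d (Ne + m) i (Sum.elim x y ∘ finSumFinEquiv.symm) =
      oneHotVec d Ne i x * allTop d m y + allTop d Ne x * oneHotVec d m i y := by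
  classical
  have hx := fun h : IsOneHot (Fin.castSucc i) (Fin.last d) x =>
    h.not_forall_eq (Fin.castSucc_ne_last i)
  have hy := fun h : IsOneHot (Fin.castSucc i) (Fin.last d) y =>
    h.not_forall_eq (Fin.castSucc_ne_last i)
  simp only [oneHotVec, allTop, isOneHot_comp_equiv, isOneHot_sumElim]
  split_ifs <;> simp_all

theorem sum_smul_wSplit (Ne m : ℕ) (c : Fin d → ℂ) :
    ∑ i, c i • wSplit d Ne m i = fun p =>
      oneHotSum d Ne c p.1 * (((1 / Real.sqrt (Ne + m : ℕ) : ℝ) : ℂ) • allTop d m) p.2 +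
        allTop d Ne p.1 * (((1 / Real.sqrt (Ne + m : ℕ) : ℝ) : ℂ) • oneHotSum d m c) p.2 := by
  ext ⟨x, y⟩
  have hsplit : ∀ i,
      wSplit d Ne m i (x, y) = wVec d (Ne + m) i (Sum.elim x y ∘ finSumFinEquiv.symm) :=
    fun i => rfl
  simp only [Finset.sum_apply, Pi.smul_apply, hsplit, wVec_eq_smul, oneHotVec_sumElim, oneHotSum,
    smul_eq_mul, Finset.sum_mul, Finset.mul_sum, ← Finset.sum_add_distrib]
  exact Finset.sum_congr rfl fun i _ => by ring

end WCode

theorem wcode_erasure_of_encoded_state_general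
    (d n Ne : ℕ) (hNen : Ne < n)
    (c : Fin d → ℂ) (hc : IsUnitVector c) :
    ptrA (Matrix.vecMulVec (∑ i, c i • wSplit d Ne (n - Ne) i)
        (star (∑ i, c i • wSplit d Ne (n - Ne) i))) =
      ((Ne : ℂ) / n) • Matrix.vecMulVec (allTop d (n - Ne)) (star (allTop d (n - Ne))) +
        (1 - (Ne : ℂ) / n) • Matrix.vecMulVec (∑ i, c i • wVec d (n - Ne) i)
          (star (∑ i, c i • wVec d (n - Ne) i)) := by
  rw [sum_smul_wSplit, sum_smul_wVec,
    ptrA_vecMulVec_add_of_orthogonal _ _ _ _ (star_allTop_dotProduct_oneHotSum _ _),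
    star_oneHotSum_dotProduct_self, hc.star_dotProduct_self, star_allTop_dotProduct_self,
    vecMulVec_ofReal_smul_star, vecMulVec_ofReal_smul_star, vecMulVec_ofReal_smul_star,
    ofReal_one_div_sqrt_sq, ofReal_one_div_sqrt_sq, Nat.add_sub_of_le hNen.le,
    smul_smul, smul_smul, smul_smul]
  have hn : (n : ℂ) ≠ 0 := Nat.cast_ne_zero.mpr (by omega)
  have hm : (n : ℂ) - Ne ≠ 0 := sub_ne_zero.mpr (by exact_mod_cast hNen.ne')
  congr 2
  · ring
  · rw [Nat.cast_sub hNen.le]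
    field_simp

/-- **Erasure of a W-code encoded pure state (equation (33)).**
Erasing the first `N_e` of `n` subsystems of a W-code encoded pure state leaves the
mixture `(N_e/n) |⊥⟩⟨⊥| + (1 - N_e/n) Ψ' Ψ'ᴴ`. -/
theorem wcode_erasure_of_encoded_state
    (d n Ne : ℕ) (hd : 1 ≤ d) (hn : 2 ≤ n) (hNe : 1 ≤ Ne) (hNen : Ne < n)
    (c : Fin d → ℂ) (hc : IsUnitVector c) :
    ptrA (Matrix.vecMulVec (∑ i, c i • wSplit d Ne (n - Ne) i)
        (star (∑ i, c i • wSplit d Ne (n - Ne) i))) =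
      ((Ne : ℂ) / n) • Matrix.vecMulVec (allTop d (n - Ne)) (star (allTop d (n - Ne))) +
        (1 - (Ne : ℂ) / n) • Matrix.vecMulVec (∑ i, c i • wVec d (n - Ne) i)
          (star (∑ i, c i • wVec d (n - Ne) i)) :=
  wcode_erasure_of_encoded_state_general d n Ne hNen c hc

end
end

section
/- Min-entropy SDP value of the erased W-code Choi state. Fix d ≥ 1, n ≥ 2 and 1 ≤ N_e < n, and set m := n − N_e. Model the physical space as (Fin N_e → Fin (d+1)) × (Fin m → Fin (d+1)), let E^{(n)} be the W-code encoder (a quantum channel from Fin d to the physical space), and let J := (1/d : ℂ) • ∑ i, ∑ j, (Matrix.stdBasisMatrix i j (1:ℂ)) ⊗ₖ ptrA (E^{(n)} (Matrix.stdBasisMatrix i j 1)) be the Choi state of erasure of the first N_e subsystems composed with the encoder, a matrix on (Fin d) × (Fin m → Fin (d+1)). Then Φ_{Fin d | (Fin m → Fin (d+1))}(J) = (N_e : ℝ)/(d · n) + (1 − (N_e : ℝ)/n) · d. -/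
/-!
After erasing the first `Nₑ` of the `n = Nₑ + m` sites, the Choi state of the W-code is
`J = (Nₑ • 1 ⊗ |⊤⟩⟨⊤| + |Ω⟩⟨Ω|) / (d n)`, where `|⊤⟩` is the all-`⊤` configuration of the
remaining sites, `|Wᵢ⟩` the unnormalised W state on them and `|Ω⟩ = ∑ᵢ |i⟩ ⊗ |Wᵢ⟩`.

The matrix `X₀ = Nₑ/(d n) |⊤⟩⟨⊤| + (1/n) ∑ᵢ |Wᵢ⟩⟨Wᵢ|` is feasible, since
`1 ⊗ X₀ - J = (d • 1 ⊗ ∑ₖ |Wₖ⟩⟨Wₖ| - |Ω⟩⟨Ω|) / (d n)` and `|⟨Ω, z⟩|² ≤ d ∑ᵢ |⟨i ⊗ Wᵢ, z⟩|²`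
by Cauchy–Schwarz; its trace is the claimed value. Conversely, for a feasible `X`, the diagonal
entry of `1 ⊗ X - J` at `(i, ⊤)` gives `X_⊤⊤ ≥ Nₑ/(d n)`, and testing against `Ω`, followed by
Cauchy–Schwarz for the form of `X` on `|Wᵢ⟩ = ∑ₐ |eᵢₐ⟩`, gives
`m ∑ᵢₐ X_{eᵢₐ eᵢₐ} ≥ ⟨Ω, J Ω⟩ = d m² / n`. The one-excitation configurations `eᵢₐ` are distinct
from each other and from `⊤`, so `tr X ≥ Nₑ/(d n) + d m / n`.
-/

open scoped Kronecker ComplexOrder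
open Matrix MeasureTheory

noncomputable section

/-- The SDP `Φ_{A|B}(K) = 2^{-H_min(A|B)_K}` (primal form). -/
def Phi {A B : Type*} [Fintype A] [DecidableEq A] [Fintype B] [DecidableEq B]
    (K : Matrix (A × B) (A × B) ℂ) : ℝ :=
  sInf {r : ℝ | ∃ X : Matrix B B ℂ, X.PosSemidef ∧
    ((1 : Matrix A A ℂ) ⊗ₖ X - K).PosSemidef ∧ r = X.trace.re}

/-- Partial trace over the first factor, as a linear map (the erasure channel). -/
def ptrALin {A B : Type*} [Fintype A] [Fintype B] :
    Matrix (A × B) (A × B) ℂ →ₗ[ℂ] Matrix B B ℂ where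
  toFun M := Matrix.of fun b b' => ∑ a, M (a, b) (a, b')
  map_add' M N := by ext b b'; simp [Finset.sum_add_distrib]
  map_smul' c M := by ext b b'; simp [Finset.mul_sum]

/-- Choi state of a channel out of `Fin d`. -/
def choiState (d : ℕ) {P' : Type*} [Fintype P']
    (Φm : Matrix (Fin d) (Fin d) ℂ →ₗ[ℂ] Matrix P' P' ℂ) :
    Matrix (Fin d × P') (Fin d × P') ℂ :=
  (1 / d : ℂ) • ∑ i, ∑ j, (Matrix.single i j (1 : ℂ)) ⊗ₖ Φm (Matrix.single i j 1)

/-- The isometry matrix of the W-code encoder on the split physical space. -/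
def wIsometry (d Ne m : ℕ) :
    Matrix ((Fin Ne → Fin (d + 1)) × (Fin m → Fin (d + 1))) (Fin d) ℂ :=
  Matrix.of fun x i => wSplit d Ne m i x

/-- The W-code encoder `X ↦ V X Vᴴ` as a linear map. -/
def wEncoder (d Ne m : ℕ) :
    Matrix (Fin d) (Fin d) ℂ →ₗ[ℂ]
      Matrix ((Fin Ne → Fin (d + 1)) × (Fin m → Fin (d + 1)))
        ((Fin Ne → Fin (d + 1)) × (Fin m → Fin (d + 1))) ℂ where
  toFun X := wIsometry d Ne m * X * (wIsometry d Ne m)ᴴ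
  map_add' X Y := by simp [Matrix.mul_add, Matrix.add_mul]
  map_smul' c X := by simp [Matrix.mul_smul, Matrix.smul_mul]

open Finset

theorem LinearMap.apply_sum_sum_le_card_mul {M ι : Type*} [AddCommGroup M] [Module ℂ M]
    (B : M →ₗ⋆[ℂ] M →ₗ[ℂ] ℂ) (hB : ∀ u, 0 ≤ B u u) (s : Finset ι) (v : ι → M) :
    B (∑ a ∈ s, v a) (∑ a ∈ s, v a) ≤ #s * ∑ a ∈ s, B (v a) (v a) := by
  have key : ∑ a ∈ s, ∑ b ∈ s, B (v a - v b) (v a - v b) =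
      2 * (#s * ∑ a ∈ s, B (v a) (v a) - B (∑ a ∈ s, v a) (∑ a ∈ s, v a)) := by
    simp only [map_sub, LinearMap.sub_apply, map_sum, LinearMap.sum_apply, sum_sub_distrib,
      sum_const, nsmul_eq_mul, ← mul_sum]
    rw [Finset.sum_comm (f := fun a b => B (v b) (v a))]
    ring
  have htwice : 0 ≤ 2 * (#s * ∑ a ∈ s, B (v a) (v a) - B (∑ a ∈ s, v a) (∑ a ∈ s, v a)) :=
    key ▸ sum_nonneg fun a _ => sum_nonneg fun b _ => hB _
  have hhalf : (0 : ℂ) ≤ 1 / 2 := by rw [Complex.le_def]; norm_num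
  simpa [← mul_assoc] using mul_nonneg hhalf htwice

theorem Complex.star_sum_mul_sum_le {ι : Type*} (s : Finset ι) (c : ι → ℂ) :
    star (∑ a ∈ s, c a) * ∑ a ∈ s, c a ≤ #s * ∑ a ∈ s, star (c a) * c a := by
  have hinner (u : ℂ) : innerₛₗ ℂ u u = star u * u := by
    rw [innerₛₗ_apply_apply, RCLike.inner_apply, mul_comm]; rfl
  simpa only [hinner] using
    (innerₛₗ ℂ).apply_sum_sum_le_card_mul (fun u => hinner u ▸ star_mul_self_nonneg u) s c

theorem Matrix.toLinearMapₛₗ₂'_starRingEnd_apply {P : Type*} [Fintype P] [DecidableEq P]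
    (X : Matrix P P ℂ) (u w : P → ℂ) :
    Matrix.toLinearMapₛₗ₂' ℂ (starRingEnd ℂ) (RingHom.id ℂ) X u w = star u ⬝ᵥ X *ᵥ w := by
  simp only [Matrix.toLinearMapₛₗ₂'_apply, dotProduct, mulVec, Finset.mul_sum]
  refine sum_congr rfl fun i _ => sum_congr rfl fun j _ => ?_
  simp only [smul_eq_mul, RingHom.id_apply, Pi.star_apply, Complex.star_def]
  ring

theorem Matrix.PosSemidef.star_sum_dotProduct_mulVec_sum_le {P ι : Type*} [Fintype P]
    [DecidableEq P] {X : Matrix P P ℂ} (hX : X.PosSemidef) (s : Finset ι) (v : ι → P → ℂ) :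
    star (∑ a ∈ s, v a) ⬝ᵥ X *ᵥ ∑ a ∈ s, v a ≤ #s * ∑ a ∈ s, star (v a) ⬝ᵥ X *ᵥ v a := by
  simpa only [toLinearMapₛₗ₂'_starRingEnd_apply] using
    (toLinearMapₛₗ₂' ℂ (starRingEnd ℂ) (RingHom.id ℂ) X).apply_sum_sum_le_card_mul
      (fun u => by
        simpa only [toLinearMapₛₗ₂'_starRingEnd_apply] using hX.dotProduct_mulVec_nonneg u) s v

namespace Matrix

variable {A B : Type*} [Fintype A] [DecidableEq A] [Fintype B]

theorem star_dotProduct_vecMulVec_mulVec (v z : B → ℂ) :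
    star z ⬝ᵥ vecMulVec v (star v) *ᵥ z = star (star v ⬝ᵥ z) * (star v ⬝ᵥ z) := by
  rw [vecMulVec_mulVec, star_dotProduct]
  simp [mul_comm]

theorem star_dotProduct_one_kronecker_mulVec (X : Matrix B B ℂ) (z : A × B → ℂ) :
    star z ⬝ᵥ (1 ⊗ₖ X) *ᵥ z = ∑ a, star (fun b => z (a, b)) ⬝ᵥ X *ᵥ fun b => z (a, b) := by
  have h : (1 ⊗ₖ X) *ᵥ z = fun p => (X *ᵥ fun b => z (p.1, b)) p.2 := by
    ext ⟨a, b⟩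
    simp [mulVec, dotProduct, Fintype.sum_prod_type, one_apply, ite_mul]
  rw [h, dotProduct, Fintype.sum_prod_type]
  rfl

end Matrix

theorem choiState_apply {d : ℕ} {P : Type*} [Fintype P]
    (Φ : Matrix (Fin d) (Fin d) ℂ →ₗ[ℂ] Matrix P P ℂ) (p q : Fin d) (y y' : P) :
    choiState d Φ (p, y) (q, y') = (1 / d : ℂ) * Φ (single p q 1) y y' := by
  simp only [choiState, Matrix.smul_apply, Matrix.sum_apply, kroneckerMap_apply, smul_eq_mul]
  rw [Finset.sum_eq_single p, Finset.sum_eq_single q] <;> simp +contextual [single_apply]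

section Configurations

variable {d k : ℕ}

def vacuum (d k : ℕ) : Fin k → Fin (d + 1) := fun _ => Fin.last d

def excitation (i : Fin d) (a : Fin k) : Fin k → Fin (d + 1) :=
  Function.update (vacuum d k) a i.castSucc

theorem excitation_ne_vacuum (i : Fin d) (a : Fin k) : excitation i a ≠ vacuum d k := by
  intro h
  simpa [excitation, vacuum, Fin.castSucc_ne_last] using congrFun h a

theorem excitation_inj {i j : Fin d} {a b : Fin k} :
    excitation i a = excitation j b ↔ i = j ∧ a = b := by
  refine ⟨fun h => ?_, fun ⟨hij, hab⟩ => hij ▸ hab ▸ rfl⟩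
  have hab : a = b := by
    by_contra hab
    simpa [excitation, vacuum, hab, Fin.castSucc_ne_last] using congrFun h a
  subst hab
  simpa [excitation] using congrFun h a

theorem excitation_injective : Function.Injective fun p : Fin d × Fin k => excitation p.1 p.2 :=
  fun _ _ h => Prod.ext_iff.2 (excitation_inj.1 h)

end Configurations

section States

variable {d k : ℕ}

def vacuumVec (d k : ℕ) : (Fin k → Fin (d + 1)) → ℂ := Pi.single (vacuum d k) 1

def wState (d k : ℕ) (i : Fin d) : (Fin k → Fin (d + 1)) → ℂ :=
  ∑ a, Pi.single (excitation i a) 1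

theorem wState_apply (i : Fin d) (x : Fin k → Fin (d + 1)) :
    wState d k i x = ∑ a, if x = excitation i a then 1 else 0 := by
  simp [wState, Pi.single_apply]

theorem wState_excitation (i j : Fin d) (b : Fin k) :
    wState d k i (excitation j b) = if j = i then 1 else 0 := by
  by_cases h : j = i <;> simp [wState_apply, excitation_inj, h]

theorem wState_vacuum (i : Fin d) : wState d k i (vacuum d k) = 0 := by
  simp [wState_apply, (excitation_ne_vacuum _ _).symm]

theorem star_vacuumVec : star (vacuumVec d k) = vacuumVec d k := by
  simp [vacuumVec]

theorem star_wState (i : Fin d) : star (wState d k i) = wState d k i := by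
  simp [wState]

theorem vacuumVec_dotProduct_vacuumVec : vacuumVec d k ⬝ᵥ vacuumVec d k = 1 := by
  simp [vacuumVec]

theorem wState_dotProduct_vacuumVec (i : Fin d) : wState d k i ⬝ᵥ vacuumVec d k = 0 := by
  simp [vacuumVec, wState_vacuum]

theorem wState_dotProduct_wState (i j : Fin d) :
    wState d k i ⬝ᵥ wState d k j = if i = j then (k : ℂ) else 0 := by
  rw [wState, sum_dotProduct]
  simp only [single_dotProduct, wState_excitation, one_mul]
  split_ifs <;> simp

theorem wVec_eq_smul_wState (i : Fin d) :
    wVec d k i = ((1 / Real.sqrt k : ℝ) : ℂ) • wState d k i := by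
  ext x
  have hcond : (∃ a, x a = i.castSucc ∧ ∀ b, b ≠ a → x b = Fin.last d) ↔
      ∃ a, x = excitation i a := by
    simp only [excitation, Function.eq_update_iff, vacuum]
  rw [wVec, if_congr hcond rfl rfl]
  split_ifs with hx
  · obtain ⟨a, rfl⟩ := hx
    simp [wState_excitation]
  · simp_all [wState_apply]

end States

theorem Fin.castAdd_ne_natAdd {m n : ℕ} (a : Fin m) (b : Fin n) :
    Fin.castAdd n a ≠ Fin.natAdd m b := by
  simp [Fin.ext_iff]; omega

section Concatenation

variable {d Ne m : ℕ}

def concatEquiv (d Ne m : ℕ) :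
    (Fin Ne → Fin (d + 1)) × (Fin m → Fin (d + 1)) ≃ (Fin (Ne + m) → Fin (d + 1)) :=
  (Equiv.sumArrowEquivProdArrow _ _ _).symm.trans (finSumFinEquiv.arrowCongr (Equiv.refl _))

theorem concatEquiv_symm_excitation_castAdd (i : Fin d) (a : Fin Ne) :
    (concatEquiv d Ne m).symm (excitation i (Fin.castAdd m a)) = (excitation i a, vacuum d m) := by
  ext b <;> simp [concatEquiv, excitation, vacuum, Function.update_apply,
    (Fin.castAdd_ne_natAdd _ _).symm]

theorem concatEquiv_symm_excitation_natAdd (i : Fin d) (b : Fin m) :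
    (concatEquiv d Ne m).symm (excitation i (Fin.natAdd Ne b)) = (vacuum d Ne, excitation i b) := by
  ext a <;> simp [concatEquiv, excitation, vacuum, Function.update_apply, Fin.castAdd_ne_natAdd]

theorem wState_concatEquiv (i : Fin d) (x : Fin Ne → Fin (d + 1)) (y : Fin m → Fin (d + 1)) :
    wState d (Ne + m) i (concatEquiv d Ne m (x, y)) =
      wState d Ne i x * vacuumVec d m y + vacuumVec d Ne x * wState d m i y := by
  simp only [wState_apply, Fin.sum_univ_add, ← Equiv.eq_symm_apply,
    concatEquiv_symm_excitation_castAdd, concatEquiv_symm_excitation_natAdd, Prod.mk.injEq,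
    ite_and, vacuumVec, Pi.single_apply, Finset.sum_mul, Finset.mul_sum, ite_mul, one_mul,
    zero_mul]

theorem wSplit_apply (i : Fin d) (x : Fin Ne → Fin (d + 1)) (y : Fin m → Fin (d + 1)) :
    wSplit d Ne m i (x, y) = ((1 / Real.sqrt (Ne + m) : ℝ) : ℂ) *
      (wState d Ne i x * vacuumVec d m y + vacuumVec d Ne x * wState d m i y) := by
  rw [← wState_concatEquiv]
  simp only [wSplit, wVec_eq_smul_wState, Pi.smul_apply, smul_eq_mul]
  push_cast
  rfl

end Concatenation

section Channel

variable {d Ne m : ℕ}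

theorem conj_wSplit (i : Fin d) (u : (Fin Ne → Fin (d + 1)) × (Fin m → Fin (d + 1))) :
    starRingEnd ℂ (wSplit d Ne m i u) = wSplit d Ne m i u := by
  simp only [wSplit, wVec]
  split_ifs <;> simp

theorem wEncoder_single_apply (p q : Fin d)
    (u u' : (Fin Ne → Fin (d + 1)) × (Fin m → Fin (d + 1))) :
    wEncoder d Ne m (single p q 1) u u' = wSplit d Ne m p u * wSplit d Ne m q u' := by
  simp [wEncoder, single_eq_single_vecMulVec_single, mul_vecMulVec, vecMulVec_mul,
    vecMulVec_apply, wIsometry, conj_wSplit]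

theorem wSplit_slice (i : Fin d) (y : Fin m → Fin (d + 1)) :
    (fun x => wSplit d Ne m i (x, y)) = ((1 / Real.sqrt (Ne + m) : ℝ) : ℂ) •
      (vacuumVec d m y • wState d Ne i + wState d m i y • vacuumVec d Ne) := by
  ext x
  simp only [wSplit_apply, Pi.smul_apply, Pi.add_apply, smul_eq_mul]
  ring

theorem ptrALin_wEncoder_single_apply (p q : Fin d) (y y' : Fin m → Fin (d + 1)) :
    ptrALin (wEncoder d Ne m (single p q 1)) y y' = (1 / (Ne + m) : ℂ) *
      ((if p = q then (Ne : ℂ) else 0) * vacuumVec d m y * vacuumVec d m y' +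
        wState d m p y * wState d m q y') := by
  set c : ℂ := ((1 / Real.sqrt (Ne + m) : ℝ) : ℂ) with hc_def
  have hc : c * c = 1 / (Ne + m) := by
    rw [hc_def, ← Complex.ofReal_mul, div_mul_div_comm, one_mul,
      Real.mul_self_sqrt (by positivity)]
    push_cast; ring
  change ∑ x, _ = _
  simp only [wEncoder_single_apply]
  change (fun x => wSplit d Ne m p (x, y)) ⬝ᵥ (fun x => wSplit d Ne m q (x, y')) = _
  simp only [wSplit_slice, smul_dotProduct, dotProduct_smul, add_dotProduct, dotProduct_add,
    wState_dotProduct_wState, wState_dotProduct_vacuumVec, dotProduct_comm (vacuumVec d Ne),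
    vacuumVec_dotProduct_vacuumVec, smul_eq_mul]
  rw [← hc]
  split_ifs <;> ring

end Channel

section ChoiState

variable {d Ne m : ℕ}

def wBell (d m : ℕ) : Fin d × (Fin m → Fin (d + 1)) → ℂ := fun p => wState d m p.1 p.2

theorem star_wBell : star (wBell d m) = wBell d m := by
  funext p
  exact congrFun (star_wState p.1) p.2

theorem wBell_slice (i : Fin d) : (fun y => wBell d m (i, y)) = wState d m i := rfl

theorem choiState_erased_wEncoder :
    choiState d (ptrALin ∘ₗ wEncoder d Ne m) = (1 / (d * (Ne + m)) : ℝ) •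
      ((Ne : ℝ) • (1 ⊗ₖ vecMulVec (vacuumVec d m) (star (vacuumVec d m))) +
        vecMulVec (wBell d m) (star (wBell d m))) := by
  ext ⟨p, y⟩ ⟨q, y'⟩
  rw [choiState_apply, LinearMap.comp_apply, ptrALin_wEncoder_single_apply]
  simp only [star_vacuumVec, star_wBell, Matrix.smul_apply, Matrix.add_apply, kroneckerMap_apply,
    vecMulVec_apply, one_apply, wBell, Complex.real_smul]
  split_ifs <;> push_cast [one_div, mul_inv] <;> ring

end ChoiState

section FeasiblePoint

variable {d Ne m : ℕ}

def wGram (d m : ℕ) : Matrix (Fin m → Fin (d + 1)) (Fin m → Fin (d + 1)) ℂ :=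
  ∑ k, vecMulVec (wState d m k) (star (wState d m k))

def optimalX (d Ne m : ℕ) : Matrix (Fin m → Fin (d + 1)) (Fin m → Fin (d + 1)) ℂ :=
  (Ne / (d * (Ne + m)) : ℝ) • vecMulVec (vacuumVec d m) (star (vacuumVec d m)) +
    (1 / (Ne + m) : ℝ) • wGram d m

theorem posSemidef_wGram : (wGram d m).PosSemidef :=
  posSemidef_sum _ fun _ _ => posSemidef_vecMulVec_self_star _

theorem posSemidef_optimalX : (optimalX d Ne m).PosSemidef :=
  ((posSemidef_vecMulVec_self_star _).smul (by positivity)).add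
    (posSemidef_wGram.smul (by positivity))

theorem trace_optimalX :
    (optimalX d Ne m).trace = ((Ne / (d * (Ne + m)) + d * m / (Ne + m) : ℝ) : ℂ) := by
  simp only [optimalX, wGram, trace_add, trace_smul, trace_sum, trace_vecMulVec, star_vacuumVec,
    star_wState, vacuumVec_dotProduct_vacuumVec, wState_dotProduct_wState, if_true, sum_const,
    card_univ, Fintype.card_fin, Complex.real_smul, nsmul_eq_mul]
  push_cast
  ring

theorem one_kronecker_optimalX_sub_choiState (hd : d ≠ 0) :
    1 ⊗ₖ optimalX d Ne m - choiState d (ptrALin ∘ₗ wEncoder d Ne m) =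
      (1 / (d * (Ne + m)) : ℝ) • ((d : ℝ) • (1 ⊗ₖ wGram d m) -
        vecMulVec (wBell d m) (star (wBell d m))) := by
  rw [choiState_erased_wEncoder, optimalX, kronecker_add, kronecker_smul, kronecker_smul]
  match_scalars <;> field_simp
  ring

theorem posSemidef_smul_one_kronecker_wGram_sub :
    ((d : ℝ) • (1 ⊗ₖ wGram d m) - vecMulVec (wBell d m) (star (wBell d m))).PosSemidef := by
  refine .of_dotProduct_mulVec_nonneg
    (((PosSemidef.one.kronecker posSemidef_wGram).smul (Nat.cast_nonneg d)).isHermitian.sub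
      (posSemidef_vecMulVec_self_star _).isHermitian) fun z => ?_
  set c : Fin d → Fin d → ℂ := fun i k => star (wState d m k) ⬝ᵥ fun y => z (i, y)
  have hbell : star (wBell d m) ⬝ᵥ z = ∑ i, c i i := by
    simp only [dotProduct, Fintype.sum_prod_type]; rfl
  have hform : star z ⬝ᵥ ((d : ℝ) • (1 ⊗ₖ wGram d m) -
      vecMulVec (wBell d m) (star (wBell d m))) *ᵥ z =
      d * ∑ i, ∑ k, star (c i k) * c i k - star (∑ i, c i i) * ∑ i, c i i := by
    simp only [sub_mulVec, dotProduct_sub, smul_mulVec, dotProduct_smul,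
      star_dotProduct_one_kronecker_mulVec, wGram, sum_mulVec, dotProduct_sum,
      star_dotProduct_vecMulVec_mulVec, hbell, Complex.real_smul, Complex.ofReal_natCast]
    rfl
  have hdiag : ∀ i, star (c i i) * c i i ≤ ∑ k, star (c i k) * c i k := fun i =>
    single_le_sum (fun k _ => star_mul_self_nonneg (c i k)) (mem_univ i)
  rw [hform, sub_nonneg]
  calc star (∑ i, c i i) * ∑ i, c i i ≤ d * ∑ i, star (c i i) * c i i := by
        simpa using Complex.star_sum_mul_sum_le univ fun i => c i i
    _ ≤ d * ∑ i, ∑ k, star (c i k) * c i k :=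
        mul_le_mul_of_nonneg_left (sum_le_sum fun i _ => hdiag i) (Nat.cast_nonneg d)

theorem posSemidef_one_kronecker_optimalX_sub_choiState (hd : d ≠ 0) :
    (1 ⊗ₖ optimalX d Ne m - choiState d (ptrALin ∘ₗ wEncoder d Ne m)).PosSemidef := by
  rw [one_kronecker_optimalX_sub_choiState hd]
  exact posSemidef_smul_one_kronecker_wGram_sub.smul (by positivity)

end FeasiblePoint

section LowerBound

variable {d Ne m : ℕ} {X : Matrix (Fin m → Fin (d + 1)) (Fin m → Fin (d + 1)) ℂ}

theorem wBell_dotProduct_wBell : wBell d m ⬝ᵥ wBell d m = d * m := by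
  simp only [dotProduct, Fintype.sum_prod_type]
  change ∑ i, wState d m i ⬝ᵥ wState d m i = _
  simp [wState_dotProduct_wState]

theorem star_wBell_dotProduct_choiState_mulVec (hd : d ≠ 0) :
    star (wBell d m) ⬝ᵥ choiState d (ptrALin ∘ₗ wEncoder d Ne m) *ᵥ wBell d m =
      ((d * m * m / (Ne + m) : ℝ) : ℂ) := by
  rw [choiState_erased_wEncoder]
  simp only [smul_mulVec, add_mulVec, dotProduct_smul, dotProduct_add,
    star_dotProduct_one_kronecker_mulVec, star_dotProduct_vecMulVec_mulVec]
  simp only [star_vacuumVec, star_wBell, wBell_dotProduct_wBell, dotProduct_comm (vacuumVec d m),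
    wBell_slice, wState_dotProduct_vacuumVec, star_zero, mul_zero, sum_const_zero, smul_zero,
    zero_add, star_mul', star_natCast, Complex.real_smul]
  push_cast
  field_simp

theorem le_diag_vacuum (hd : 0 < d)
    (hJ : (1 ⊗ₖ X - choiState d (ptrALin ∘ₗ wEncoder d Ne m)).PosSemidef) :
    ((Ne / (d * (Ne + m)) : ℝ) : ℂ) ≤ X (vacuum d m) (vacuum d m) := by
  have h := hJ.diag_nonneg (i := (⟨0, hd⟩, vacuum d m))
  rw [Matrix.sub_apply, kroneckerMap_apply, choiState_apply, LinearMap.comp_apply,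
    ptrALin_wEncoder_single_apply, sub_nonneg] at h
  convert h using 1
  · push_cast [div_eq_mul_inv, mul_inv]
    simp only [if_pos, vacuumVec, Pi.single_eq_same, wState_vacuum, mul_one, mul_zero, add_zero]
    ring
  · simp

theorem le_card_mul_sum_diag_excitation (hd : d ≠ 0) (hX : X.PosSemidef)
    (hJ : (1 ⊗ₖ X - choiState d (ptrALin ∘ₗ wEncoder d Ne m)).PosSemidef) :
    ((d * m * m / (Ne + m) : ℝ) : ℂ) ≤
      m * ∑ i : Fin d, ∑ a : Fin m, X (excitation i a) (excitation i a) := by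
  have h := hJ.dotProduct_mulVec_nonneg (wBell d m)
  rw [sub_mulVec, dotProduct_sub, sub_nonneg, star_wBell_dotProduct_choiState_mulVec hd,
    star_dotProduct_one_kronecker_mulVec] at h
  refine h.trans ?_
  rw [mul_sum]
  refine sum_le_sum fun i _ => ?_
  rw [wBell_slice, star_wState, wState]
  simpa using hX.star_sum_dotProduct_mulVec_sum_le univ fun a => Pi.single (excitation i a) 1

theorem diag_vacuum_add_sum_diag_excitation_le_trace (hX : X.PosSemidef) :
    X (vacuum d m) (vacuum d m) + ∑ i : Fin d, ∑ a : Fin m, X (excitation i a) (excitation i a) ≤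
      X.trace := by
  set E := univ.image fun p : Fin d × Fin m => excitation p.1 p.2
  have hvac : vacuum d m ∉ E := by simpa [E] using fun i a => excitation_ne_vacuum i a
  calc X (vacuum d m) (vacuum d m) + ∑ i : Fin d, ∑ a : Fin m, X (excitation i a) (excitation i a)
      = ∑ y ∈ insert (vacuum d m) E, X y y := by
        rw [sum_insert hvac, sum_image fun p _ q _ h => excitation_injective h,
          Fintype.sum_prod_type' fun i a => X (excitation i a) (excitation i a)]
    _ ≤ ∑ y, X y y := sum_le_univ_sum_of_nonneg fun y => hX.diag_nonneg

theorem le_trace_re_of_posSemidef (hd : 0 < d) (hm : 0 < m) (hX : X.PosSemidef)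
    (hJ : (1 ⊗ₖ X - choiState d (ptrALin ∘ₗ wEncoder d Ne m)).PosSemidef) :
    Ne / (d * (Ne + m)) + d * m / (Ne + m) ≤ X.trace.re := by
  set S := ∑ i : Fin d, ∑ a : Fin m, X (excitation i a) (excitation i a)
  have hvac := (Complex.le_def.1 (le_diag_vacuum hd hJ)).1
  have hexc := (Complex.le_def.1 (le_card_mul_sum_diag_excitation hd.ne' hX hJ)).1
  have htr := (Complex.le_def.1 (diag_vacuum_add_sum_diag_excitation_le_trace hX)).1
  rw [← Complex.ofReal_natCast, Complex.re_ofReal_mul, Complex.ofReal_re] at hexc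
  rw [Complex.ofReal_re] at hvac
  rw [Complex.add_re] at htr
  have hS : d * m / (Ne + m) ≤ S.re := by
    rw [← mul_le_mul_iff_right₀ (Nat.cast_pos.2 hm : (0 : ℝ) < m)]
    calc (m : ℝ) * (d * m / (Ne + m)) = d * m * m / (Ne + m) := by ring
      _ ≤ m * S.re := hexc
  linarith

theorem phi_choiState_erased_wEncoder (hd : 0 < d) (hm : 0 < m) :
    Phi (choiState d (ptrALin ∘ₗ wEncoder d Ne m)) = Ne / (d * (Ne + m)) + d * m / (Ne + m) := by
  refine IsLeast.csInf_eq ⟨⟨optimalX d Ne m, posSemidef_optimalX,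
    posSemidef_one_kronecker_optimalX_sub_choiState hd.ne', ?_⟩, ?_⟩
  · rw [trace_optimalX, Complex.ofReal_re]
  · rintro r ⟨X, hX, hJ, rfl⟩
    exact le_trace_re_of_posSemidef hd hm hX hJ

end LowerBound

theorem wcode_choi_phi_value_general
    (d n Ne : ℕ) (hd : 1 ≤ d) (hNen : Ne < n) :
    Phi (choiState d (ptrALin ∘ₗ wEncoder d Ne (n - Ne))) =
      (Ne : ℝ) / (d * n) + (1 - (Ne : ℝ) / n) * d := by
  rw [phi_choiState_erased_wEncoder hd (Nat.sub_pos_of_lt hNen), Nat.cast_sub hNen.le,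
    add_sub_cancel]
  have hn : (n : ℝ) ≠ 0 := Nat.cast_ne_zero.2 (by omega)
  field_simp

/-- **Min-entropy SDP value of the erased W-code Choi state.**
For the W-code on `n` subsystems with the first `N_e` erased,
`Φ(J) = N_e/(d·n) + (1 - N_e/n)·d`. -/
theorem wcode_choi_phi_value
    (d n Ne : ℕ) (hd : 1 ≤ d) (hn : 2 ≤ n) (hNe : 1 ≤ Ne) (hNen : Ne < n) :
    Phi (choiState d (ptrALin ∘ₗ wEncoder d Ne (n - Ne))) =
      (Ne : ℝ) / (d * n) + (1 - (Ne : ℝ) / n) * d :=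
  wcode_choi_phi_value_general d n Ne hd hNen

end
end
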